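/- arXiv:1002.3875 — 8 statements merged into one kernel-verified Lean document; each statement's English description precedes it below -/
import Mathlib

section
/- Let f ∈ L^p(ℝ^n) with p = 2n/(n-1). Then there exists a sequence r_k → ∞ such that for any fixed constants s₁, s₂ > 0, the integral ∫_{r_k - s₁ ≤ |x| ≤ r_k + s₂} |f(x)|² dx tends to 0 as k → ∞. -/
/-!
By Hölder's inequality with exponents `p / 2` and `n`, the `L²` mass of `f` on a shell of radius
`r` and fixed width is at most `C (r ∫_shell |f|^p)^(2/p)`: the shell has volume `O(r^(n-1))` and
`(n - 1) / n = 2 / p`. It therefore suffices to find radii `r_k → ∞` along which `r_k` times the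
`L^p` mass of ever wider shells tends to zero. Grouping the `L^p` mass into unit annuli gives a
summable sequence, whose window sums over `[m - c, m + c]` are again summable in `m`; as `∑ 1/m`
diverges, `m` times the window sum is small for infinitely many `m`, and a diagonal choice with
`c = k` produces `r_k`.
-/

open MeasureTheory Filter Topology Module Metric
open scoped ENNReal

lemma frequently_natCast_mul_lt_of_summable {W : ℕ → ℝ} (hW : Summable W) {ε : ℝ}
    (hε : 0 < ε) : ∃ᶠ m : ℕ in atTop, (m : ℝ) * W m < ε := by
  intro hge
  simp only [not_lt] at hge
  refine Real.not_summable_natCast_inv ((summable_mul_left_iff hε.ne').mp ?_)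
  refine hW.of_norm_bounded_eventually_nat ?_
  filter_upwards [eventually_ge_atTop 1, hge] with m hm hεm
  have hm : (0 : ℝ) < m := by exact_mod_cast hm
  rw [Real.norm_of_nonneg (by positivity), ← div_eq_mul_inv, div_le_iff₀' hm]
  exact hεm

lemma summable_sum_Icc_sub_add {β : ℕ → ℝ} (hβ : Summable β) (hβ0 : 0 ≤ β) (c : ℕ) :
    Summable fun m => ∑ j ∈ Finset.Icc (m - c) (m + c), β j := by
  have hshift (i : ℕ) : Summable fun m => β (m + i - c) :=
    (summable_nat_add_iff c).mp <| by
      simpa [Nat.add_right_comm _ c i] using (summable_nat_add_iff i).mpr hβ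
  refine .of_nonneg_of_le (fun m => Finset.sum_nonneg fun j _ => hβ0 j) (fun m => ?_)
    (summable_sum fun i _ => hshift i : Summable fun m =>
      ∑ i ∈ Finset.range (2 * c + 1), β (m + i - c))
  have hcover : Finset.Icc (m - c) (m + c) ⊆
      (Finset.range (2 * c + 1)).image fun i => m + i - c := fun j hj => by
    rw [Finset.mem_Icc] at hj
    exact Finset.mem_image.mpr ⟨j + c - m, Finset.mem_range.mpr (by omega), by omega⟩
  calc ∑ j ∈ Finset.Icc (m - c) (m + c), β j
      ≤ ∑ j ∈ (Finset.range (2 * c + 1)).image (fun i => m + i - c), β j :=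
        Finset.sum_le_sum_of_subset_of_nonneg hcover fun j _ _ => hβ0 j
    _ ≤ _ := Finset.sum_image_le_of_nonneg fun j _ => hβ0 j

lemma exists_tendsto_natCast_mul_sum_Icc {β : ℕ → ℝ} (hβ : Summable β) (hβ0 : 0 ≤ β) :
    ∃ m : ℕ → ℕ, Tendsto m atTop atTop ∧ ∀ c : ℕ,
      Tendsto (fun k => (m k : ℝ) * ∑ j ∈ Finset.Icc (m k - c) (m k + c), β j)
        atTop (𝓝 0) := by
  have hsel (k : ℕ) := (frequently_natCast_mul_lt_of_summable (summable_sum_Icc_sub_add hβ hβ0 k)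
    (Nat.one_div_pos_of_nat (n := k))).forall_exists_of_atTop k
  choose m hkm hm using hsel
  refine ⟨m, tendsto_atTop_mono hkm tendsto_id, fun c => ?_⟩
  refine squeeze_zero' (.of_forall fun k => ?_) ?_ tendsto_one_div_add_atTop_nhds_zero_nat
  · exact mul_nonneg (Nat.cast_nonneg _) (Finset.sum_nonneg fun j _ => hβ0 j)
  filter_upwards [eventually_ge_atTop c] with k hck
  refine le_trans ?_ (hm k).le
  gcongr
  exact fun j _ _ => hβ0 j

lemma exists_tendsto_natCast_mul_measure_Icc (ρ : Measure ℕ) [IsFiniteMeasure ρ] :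
    ∃ m : ℕ → ℕ, Tendsto m atTop atTop ∧ ∀ c : ℕ,
      Tendsto (fun k => (m k : ℝ) * (ρ (Set.Icc (m k - c) (m k + c))).toReal) atTop (𝓝 0) := by
  have hsum : Summable fun j => (ρ {j}).toReal := by
    refine ENNReal.summable_toReal ?_
    rw [← measure_iUnion (fun i j hij => Set.disjoint_singleton.mpr hij)
      measurableSet_singleton]
    exact measure_ne_top ρ _
  obtain ⟨m, hm, hmc⟩ := exists_tendsto_natCast_mul_sum_Icc hsum fun _ => ENNReal.toReal_nonneg
  refine ⟨m, hm, fun c => (hmc c).congr fun k => ?_⟩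
  rw [← ENNReal.toReal_sum fun j _ => measure_ne_top ρ _, sum_measure_singleton, Finset.coe_Icc]

lemma Icc_subset_preimage_floor_Icc {m c : ℕ} {s₁ s₂ : ℝ} (h₁ : s₁ ≤ c) (h₂ : s₂ ≤ c) :
    Set.Icc ((m : ℝ) - s₁) (m + s₂) ⊆ Nat.floor ⁻¹' Set.Icc (m - c) (m + c) := by
  rintro x ⟨hx₁, hx₂⟩
  have hm : m < ⌊x⌋₊ + 1 + c := by
    have := Nat.lt_floor_add_one x
    exact_mod_cast (by linarith : (m : ℝ) < ⌊x⌋₊ + 1 + c)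
  exact ⟨by omega, Nat.floor_le_of_le (by push_cast; linarith)⟩

lemma exists_tendsto_natCast_mul_measure_shell {E : Type*} [NormedAddCommGroup E]
    [MeasurableSpace E] [OpensMeasurableSpace E] (ν : Measure E) [IsFiniteMeasure ν] :
    ∃ m : ℕ → ℕ, Tendsto m atTop atTop ∧ ∀ s₁ s₂ : ℝ,
      Tendsto (fun k => (m k : ℝ) * (ν (norm ⁻¹' Set.Icc ((m k : ℝ) - s₁) (m k + s₂))).toReal)
        atTop (𝓝 0) := by
  have hN : Measurable fun x : E => ⌊‖x‖⌋₊ := measurable_norm.nat_floor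
  obtain ⟨m, hm, hmc⟩ := exists_tendsto_natCast_mul_measure_Icc (ν.map fun x => ⌊‖x‖⌋₊)
  refine ⟨m, hm, fun s₁ s₂ => ?_⟩
  refine squeeze_zero (fun k => by positivity) (fun k => ?_) (hmc ⌈max s₁ s₂⌉₊)
  rw [Measure.map_apply hN measurableSet_Icc]
  gcongr
  · exact measure_ne_top _ _
  · exact Set.preimage_mono (Icc_subset_preimage_floor_Icc
      ((le_max_left _ _).trans (Nat.le_ceil _)) ((le_max_right _ _).trans (Nat.le_ceil _)))

lemma lintegral_enorm_rpow_le_mul_measure_univ {α F : Type*} [MeasurableSpace α]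
    [NormedAddCommGroup F] {μ : Measure α} {f : α → F} {p q : ℝ} (hp : 0 < p) (hpq : p ≤ q)
    (hf : AEStronglyMeasurable f μ) :
    ∫⁻ x, ‖f x‖ₑ ^ p ∂μ ≤ (∫⁻ x, ‖f x‖ₑ ^ q ∂μ) ^ (p / q) * μ Set.univ ^ (1 - p / q) := by
  have h := ENNReal.rpow_le_rpow (eLpNorm'_le_eLpNorm'_mul_rpow_measure_univ hp hpq hf) hp.le
  rw [eLpNorm'_eq_lintegral_enorm, eLpNorm'_eq_lintegral_enorm, ← ENNReal.rpow_mul,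
    one_div_mul_cancel hp.ne', ENNReal.rpow_one, ENNReal.mul_rpow_of_nonneg _ _ hp.le,
    ← ENNReal.rpow_mul, ← ENNReal.rpow_mul] at h
  convert h using 3 <;> field_simp

lemma setIntegral_norm_sq_eq_toReal {α F : Type*} [MeasurableSpace α] [NormedAddCommGroup F]
    {μ : Measure α} {f : α → F} (hf : AEStronglyMeasurable f μ) (s : Set α) :
    ∫ x in s, ‖f x‖ ^ 2 ∂μ = (∫⁻ x in s, ‖f x‖ₑ ^ (2 : ℝ) ∂μ).toReal := by
  rw [integral_eq_lintegral_of_nonneg_ae (.of_forall fun x => by positivity)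
    (by fun_prop : AEStronglyMeasurable (fun x => ‖f x‖ ^ 2) μ).restrict]
  congr 1
  refine lintegral_congr fun x => ?_
  rw [ENNReal.rpow_two, ENNReal.ofReal_pow (norm_nonneg _), ofReal_norm]

section AddHaar

variable {E : Type*} [NormedAddCommGroup E] [NormedSpace ℝ E] [MeasurableSpace E] [BorelSpace E]
  [FiniteDimensional ℝ E] (μ : Measure E) [μ.IsAddHaarMeasure]

lemma addHaar_shell_le [Nontrivial E] {r s₁ s₂ : ℝ} (h₁ : 0 ≤ s₁) (h₁r : s₁ ≤ r) (h₂ : 0 ≤ s₂)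
    (h₂r : s₂ ≤ r) :
    μ (norm ⁻¹' Set.Icc (r - s₁) (r + s₂)) ≤ ENNReal.ofReal
      (finrank ℝ E * 2 ^ (finrank ℝ E - 1) * (s₁ + s₂) * r ^ (finrank ℝ E - 1)) * μ (ball 0 1) := by
  set d := finrank ℝ E
  have hsub : norm ⁻¹' Set.Icc (r - s₁) (r + s₂) ⊆ closedBall (0 : E) (r + s₂) \ ball 0 (r - s₁) :=
    fun x ⟨hx₁, hx₂⟩ =>
      ⟨mem_closedBall_zero_iff.mpr hx₂, fun hx => (mem_ball_zero_iff.mp hx).not_ge hx₁⟩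
  have hpow : (r + s₂) ^ d - (r - s₁) ^ d ≤ d * 2 ^ (d - 1) * (s₁ + s₂) * r ^ (d - 1) := calc
    (r + s₂) ^ d - (r - s₁) ^ d ≤ |(r + s₂) - (r - s₁)| * d * max |r + s₂| |r - s₁| ^ (d - 1) :=
      (le_abs_self _).trans (abs_pow_sub_pow_le _ _ _)
    _ = (s₁ + s₂) * d * (r + s₂) ^ (d - 1) := by
      rw [abs_of_nonneg (by linarith), abs_of_nonneg (by linarith), abs_of_nonneg (by linarith),
        max_eq_left (by linarith)]
      ring
    _ ≤ (s₁ + s₂) * d * (2 * r) ^ (d - 1) := by gcongr <;> linarith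
    _ = _ := by ring
  calc μ (norm ⁻¹' Set.Icc (r - s₁) (r + s₂))
      ≤ μ (closedBall (0 : E) (r + s₂) \ ball 0 (r - s₁)) := measure_mono hsub
    _ = μ (closedBall (0 : E) (r + s₂)) - μ (ball 0 (r - s₁)) :=
      measure_sdiff (ball_subset_closedBall.trans (closedBall_subset_closedBall (by linarith)))
        measurableSet_ball.nullMeasurableSet measure_ball_lt_top.ne
    _ = ENNReal.ofReal ((r + s₂) ^ d - (r - s₁) ^ d) * μ (ball 0 1) := by
      rw [Measure.addHaar_closedBall μ _ (by linarith),
        Measure.addHaar_ball μ (r := r - s₁) _ (by linarith),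
        ← ENNReal.sub_mul fun _ _ => measure_ball_lt_top.ne,
        ← ENNReal.ofReal_sub _ (pow_nonneg (by linarith) _)]
    _ ≤ _ := by gcongr

lemma lintegral_enorm_sq_shell_le {F : Type*} [NormedAddCommGroup F] (hd : 2 ≤ finrank ℝ E)
    {p : ℝ} (hp : p = 2 * finrank ℝ E / (finrank ℝ E - 1)) {f : E → F}
    (hf : AEStronglyMeasurable f μ) {r s₁ s₂ : ℝ} (h₁ : 0 ≤ s₁) (h₁r : s₁ ≤ r) (h₂ : 0 ≤ s₂)
    (h₂r : s₂ ≤ r) :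
    ∫⁻ x in norm ⁻¹' Set.Icc (r - s₁) (r + s₂), ‖f x‖ₑ ^ (2 : ℝ) ∂μ ≤
      (ENNReal.ofReal (finrank ℝ E * 2 ^ (finrank ℝ E - 1) * (s₁ + s₂)) * μ (ball 0 1)) ^
          (1 / (finrank ℝ E : ℝ)) *
        (ENNReal.ofReal r * ∫⁻ x in norm ⁻¹' Set.Icc (r - s₁) (r + s₂), ‖f x‖ₑ ^ p ∂μ) ^
          (2 / p) := by
  have : Nontrivial E := Module.nontrivial_of_finrank_pos (R := ℝ) (by omega)
  set d := finrank ℝ E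
  set S : Set E := norm ⁻¹' Set.Icc (r - s₁) (r + s₂)
  have hd' : (2 : ℝ) ≤ d := by exact_mod_cast hd
  have h2p : 2 / p = (d - 1) / d := by rw [hp]; field_simp
  have h2p' : 1 - 2 / p = 1 / d := by rw [h2p]; field_simp; ring
  have hp2 : 2 ≤ p := by rw [hp, le_div_iff₀ (by linarith)]; linarith
  have hr : 0 ≤ r := h₁.trans h₁r
  calc ∫⁻ x in S, ‖f x‖ₑ ^ (2 : ℝ) ∂μ
      ≤ (∫⁻ x in S, ‖f x‖ₑ ^ p ∂μ) ^ (2 / p) * μ S ^ (1 - 2 / p) := by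
        simpa [Measure.restrict_apply_univ] using
          lintegral_enorm_rpow_le_mul_measure_univ two_pos hp2 hf.restrict
    _ ≤ (∫⁻ x in S, ‖f x‖ₑ ^ p ∂μ) ^ (2 / p) *
          (ENNReal.ofReal (d * 2 ^ (d - 1) * (s₁ + s₂) * r ^ (d - 1)) * μ (ball 0 1)) ^
            (1 / (d : ℝ)) := by
        rw [h2p']
        gcongr
        exact addHaar_shell_le μ h₁ h₁r h₂ h₂r
    _ = _ := by
        rw [ENNReal.ofReal_mul (by positivity), ENNReal.ofReal_pow hr, mul_right_comm,
          ENNReal.mul_rpow_of_nonneg _ _ (by positivity), ← ENNReal.rpow_natCast,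
          ← ENNReal.rpow_mul, ENNReal.mul_rpow_of_nonneg _ _ (by positivity)]
        have : ((d - 1 : ℕ) : ℝ) * (1 / d) = 2 / p := by
          rw [h2p, Nat.cast_sub (by omega)]; ring
        rw [this, ENNReal.mul_rpow_of_nonneg (ENNReal.ofReal r) _ (by positivity)]
        ring

theorem exists_tendsto_setIntegral_norm_sq_shell {F : Type*} [NormedAddCommGroup F]
    (hd : 2 ≤ finrank ℝ E) {f : E → F}
    (hf : MemLp f (ENNReal.ofReal (2 * finrank ℝ E / (finrank ℝ E - 1))) μ) :
    ∃ r : ℕ → ℝ, Tendsto r atTop atTop ∧ ∀ s₁ s₂ : ℝ, 0 ≤ s₁ → 0 ≤ s₂ →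
      Tendsto (fun k => ∫ x in norm ⁻¹' Set.Icc (r k - s₁) (r k + s₂), ‖f x‖ ^ 2 ∂μ)
        atTop (𝓝 0) := by
  set p : ℝ := 2 * finrank ℝ E / (finrank ℝ E - 1) with hp
  have hp0 : 0 < p := by
    have : (2 : ℝ) ≤ finrank ℝ E := by exact_mod_cast hd
    exact div_pos (by positivity) (by linarith)
  set ν := μ.withDensity fun x => ‖f x‖ₑ ^ p
  have : IsFiniteMeasure ν := isFiniteMeasure_withDensity <| by
    simpa [ENNReal.toReal_ofReal hp0.le] using (lintegral_rpow_enorm_lt_top_of_eLpNorm_lt_top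
      (ENNReal.ofReal_pos.mpr hp0).ne' ENNReal.ofReal_ne_top hf.eLpNorm_lt_top).ne
  obtain ⟨m, hm, hmass⟩ := exists_tendsto_natCast_mul_measure_shell ν
  refine ⟨fun k => m k, tendsto_natCast_atTop_atTop.comp hm, fun s₁ s₂ h₁ h₂ => ?_⟩
  set S : ℕ → Set E := fun k => norm ⁻¹' Set.Icc ((m k : ℝ) - s₁) (m k + s₂)
  have hS (k : ℕ) : MeasurableSet (S k) := measurable_norm measurableSet_Icc
  set C := ENNReal.ofReal (finrank ℝ E * 2 ^ (finrank ℝ E - 1) * (s₁ + s₂)) * μ (ball 0 1)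
  have hbound : ∀ᶠ k in atTop, ∫ x in S k, ‖f x‖ ^ 2 ∂μ ≤
      (C ^ (1 / (finrank ℝ E : ℝ))).toReal * ((m k : ℝ) * (ν (S k)).toReal) ^ (2 / p) := by
    filter_upwards [(tendsto_natCast_atTop_atTop.comp hm).eventually_ge_atTop (max s₁ s₂)]
      with k hk
    have hC : C ≠ ∞ := ENNReal.mul_ne_top ENNReal.ofReal_ne_top measure_ball_lt_top.ne
    rw [setIntegral_norm_sq_eq_toReal hf.1, ← ENNReal.toReal_ofReal (Nat.cast_nonneg (m k)),
      ← ENNReal.toReal_mul, ENNReal.toReal_rpow, ← ENNReal.toReal_mul]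
    refine ENNReal.toReal_mono (ENNReal.mul_ne_top (ENNReal.rpow_ne_top_of_nonneg (by positivity)
      hC) (ENNReal.rpow_ne_top_of_nonneg (by positivity)
        (ENNReal.mul_ne_top ENNReal.ofReal_ne_top (measure_ne_top ν _)))) ?_
    rw [withDensity_apply _ (hS k)]
    exact lintegral_enorm_sq_shell_le μ hd hp hf.1 h₁ ((le_max_left _ _).trans hk) h₂
      ((le_max_right _ _).trans hk)
  refine squeeze_zero' (.of_forall fun k => setIntegral_nonneg (hS k) fun x _ => by positivity)
    hbound ?_
  simpa [Real.zero_rpow (by positivity : 2 / p ≠ 0)] using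
    ((hmass s₁ s₂).rpow_const (Or.inr (by positivity : (0 : ℝ) ≤ 2 / p))).const_mul
      (C ^ (1 / (finrank ℝ E : ℝ))).toReal

end AddHaar

theorem shell_decay
    (n : ℕ) (hn : 2 ≤ n)
    (f : EuclideanSpace ℝ (Fin n) → ℂ)
    (hf : MemLp f (ENNReal.ofReal ((2 * n : ℝ) / (n - 1))) volume) :
    ∃ r : ℕ → ℝ, Tendsto r atTop atTop ∧
      ∀ s₁ s₂ : ℝ, 0 < s₁ → 0 < s₂ →
        Tendsto (fun k =>
            ∫ x in {x : EuclideanSpace ℝ (Fin n) |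
                r k - s₁ ≤ ‖x‖ ∧ ‖x‖ ≤ r k + s₂}, ‖f x‖ ^ 2)
          atTop (nhds 0) := by
  have hd : finrank ℝ (EuclideanSpace ℝ (Fin n)) = n := finrank_euclideanSpace_fin
  obtain ⟨r, hr, hshell⟩ :=
    exists_tendsto_setIntegral_norm_sq_shell volume (by rwa [hd]) (f := f) (by rwa [hd])
  exact ⟨r, hr, fun s₁ s₂ h₁ h₂ => hshell s₁ s₂ h₁.le h₂.le⟩
end

section
/- Let g be a positive C¹ integrable function on [0,a) such that both g and g' are strictly increasing on [0,a). If a = 2nπ + π + θ for some nonnegative integer n and 0 ≤ θ ≤ π/2, then ∫₀ᵃ g(t) cos t dt < 0. -/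
/-!
Let `φ t = sin t + sin θ`; it vanishes at `t = a`. Integrating by parts on `[0, b]`, `b < a`,
turns `∫₀ᵇ g cos` into `g b * φ b - g 0 * sin θ - ∫₀ᵇ g' φ`, and the boundary term is at most
`g b * (a - b) ≤ ∫_b^a g`, which tends to `0`. So it suffices that `∫₀ᵇ g' φ` stays above a
positive constant minus `O(a - b)`.

The function `φ` is negative only on the intervals `(2kπ + π + θ, 2kπ + 2π - θ)`. Reflecting such an
interval about its right end `r` lands where `φ ≥ 0`, and `φ x + φ (2r - x) ≥ 0`; as `g'` is
nonnegative and increasing, the reflected part outweighs the negative one. Only in the last period,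
cut off at `b`, does a piece of length at most `a - b` stay unpaired.
-/

open Real Set MeasureTheory Filter Topology intervalIntegral

theorem integral_nonneg_of_add_reflect_nonneg {f : ℝ → ℝ} {c r : ℝ} (hcr : c ≤ r)
    (hf : IntervalIntegrable f volume c (2 * r - c))
    (hfr : ∀ x ∈ Icc c r, 0 ≤ f x + f (2 * r - x)) :
    0 ≤ ∫ x in c..2 * r - c, f x := by
  have hf₁ : IntervalIntegrable f volume c r :=
    hf.mono_set (uIcc_subset_uIcc left_mem_uIcc (by rw [mem_uIcc]; left; constructor <;> linarith))
  have hf₂ : IntervalIntegrable f volume r (2 * r - c) :=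
    hf.mono_set (uIcc_subset_uIcc (by rw [mem_uIcc]; left; constructor <;> linarith) right_mem_uIcc)
  have hf₂' : IntervalIntegrable (fun x => f (2 * r - x)) volume c r := by
    have := (hf₂.comp_sub_left (2 * r)).symm
    rwa [sub_sub_cancel, show 2 * r - r = r by ring] at this
  have hreflect : ∫ x in r..2 * r - c, f x = ∫ x in c..r, f (2 * r - x) := by
    rw [integral_comp_sub_left]; ring_nf
  rw [← integral_add_adjacent_intervals hf₁ hf₂, hreflect, ← integral_add hf₁ hf₂']
  exact integral_nonneg hcr hfr

theorem neg_mul_le_integral_mul_of_reflect {h φ : ℝ → ℝ} {L r b M : ℝ} (hLr : L ≤ r)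
    (hrb : r ≤ b) (hM : 0 ≤ M) (hh : ContinuousOn h (Icc L b)) (hh_mono : MonotoneOn h (Icc L b))
    (hh_nonneg : ∀ x ∈ Icc L b, 0 ≤ h x) (hφ : Continuous φ) (hφ_ge : ∀ x ∈ Icc L r, -M ≤ φ x)
    (hφ_reflect : ∀ x ∈ Icc L r, 0 ≤ φ x + φ (2 * r - x))
    (hφ_nonneg : ∀ x ∈ Icc r b, 0 ≤ φ x) :
    -(M * h r * max 0 (2 * r - L - b)) ≤ ∫ x in L..b, h x * φ x := by
  -- `[c, 2r - c]` is the largest subinterval of `[L, b]` symmetric about `r`; only `[L, c]` is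
  -- left unpaired.
  set c := max (2 * r - b) L
  have hLc : L ≤ c := le_max_right _ _
  have hcr : c ≤ r := max_le (by linarith) hLr
  have hcb : 2 * r - c ≤ b := by linarith [le_max_left (2 * r - b) L]
  have hrmem : r ∈ Icc L b := ⟨hLr, hrb⟩
  have hint : ∀ {u v}, u ∈ Icc L b → v ∈ Icc L b →
      IntervalIntegrable (fun x => h x * φ x) volume u v := fun hu hv =>
    ((hh.mul hφ.continuousOn).mono (uIcc_subset_Icc hu hv)).intervalIntegrable
  have hLmem : L ∈ Icc L b := ⟨le_rfl, hLr.trans hrb⟩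
  have hbmem : b ∈ Icc L b := ⟨hLr.trans hrb, le_rfl⟩
  have hcmem : c ∈ Icc L b := ⟨hLc, hcr.trans hrb⟩
  have hc'mem : 2 * r - c ∈ Icc L b := ⟨by linarith, hcb⟩
  have h_left : -(M * h r * max 0 (2 * r - L - b)) ≤ ∫ x in L..c, h x * φ x := by
    have hlen : max 0 (2 * r - L - b) = c - L := by
      rw [max_comm, ← max_sub_sub_right, sub_self, sub_right_comm]
    calc -(M * h r * max 0 (2 * r - L - b)) = ∫ _ in L..c, -(M * h r) := by
          rw [intervalIntegral.integral_const, hlen, smul_eq_mul]; ring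
      _ ≤ ∫ x in L..c, h x * φ x := by
        refine integral_mono_on hLc intervalIntegrable_const (hint hLmem hcmem) fun x hx => ?_
        have hxmem : x ∈ Icc L b := ⟨hx.1, hx.2.trans (hcr.trans hrb)⟩
        have := hh_mono hxmem hrmem (hx.2.trans hcr)
        have := hh_nonneg x hxmem
        have := hφ_ge x ⟨hx.1, hx.2.trans hcr⟩
        nlinarith
  have h_mid : 0 ≤ ∫ x in c..2 * r - c, h x * φ x := by
    refine integral_nonneg_of_add_reflect_nonneg hcr (hint hcmem hc'mem) fun x hx => ?_
    have hxmem : x ∈ Icc L b := ⟨hLc.trans hx.1, hx.2.trans hrb⟩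
    have hx'mem : 2 * r - x ∈ Icc L b := ⟨by linarith [hx.2], by linarith [hx.1]⟩
    have := hh_mono hxmem hx'mem (by linarith [hx.2])
    have := hh_nonneg x hxmem
    have := hφ_nonneg (2 * r - x) ⟨by linarith [hx.2], hx'mem.2⟩
    have := hφ_reflect x ⟨hLc.trans hx.1, hx.2⟩
    nlinarith
  have h_right : 0 ≤ ∫ x in 2 * r - c..b, h x * φ x :=
    integral_nonneg hcb fun x hx =>
      mul_nonneg (hh_nonneg x ⟨hc'mem.1.trans hx.1, hx.2⟩) (hφ_nonneg x ⟨by linarith [hx.1], hx.2⟩)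
  rw [← integral_add_adjacent_intervals (hint hLmem hcmem) (hint hcmem hbmem),
    ← integral_add_adjacent_intervals (hint hcmem hc'mem) (hint hc'mem hbmem)]
  linarith

theorem sin_add_sin_nonneg {θ t : ℝ} (k : ℤ) (hθ : θ ≤ π / 2)
    (ht₀ : 2 * k * π - θ ≤ t) (ht₁ : t ≤ 2 * k * π + π + θ) : 0 ≤ sin t + sin θ := by
  rw [← sin_sub_int_mul_two_pi t k, sin_add_sin]
  refine mul_nonneg (mul_nonneg zero_le_two (sin_nonneg_of_nonneg_of_le_pi ?_ ?_))
    (cos_nonneg_of_neg_pi_div_two_le_of_le ?_ ?_) <;> linarith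

theorem sin_add_two_mul_le {θ : ℝ} (hθ₀ : 0 ≤ θ) (hθ₁ : θ ≤ π) (x : ℝ) :
    sin (x + 2 * θ) ≤ sin x + 2 * sin θ := by
  have h := sin_sub_sin (x + 2 * θ) x
  rw [show (x + 2 * θ - x) / 2 = θ by ring, show (x + 2 * θ + x) / 2 = x + θ by ring] at h
  nlinarith [cos_le_one (x + θ), sin_nonneg_of_nonneg_of_le_pi hθ₀ hθ₁]

theorem neg_le_integral_mul_sin_add_sin_period {θ b : ℝ} {h : ℝ → ℝ} (k : ℕ) (hθ₀ : 0 ≤ θ)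
    (hθ₁ : θ ≤ π / 2) (hrb : 2 * k * π + 2 * π - θ ≤ b) (hb : b ≤ 2 * k * π + 3 * π + θ)
    (hh : ContinuousOn h (Icc (2 * k * π + π + θ) b))
    (hh_mono : MonotoneOn h (Icc (2 * k * π + π + θ) b))
    (hh_nonneg : ∀ x ∈ Icc (2 * k * π + π + θ) b, 0 ≤ h x) :
    -(2 * h (2 * k * π + 2 * π - θ) * max 0 (2 * k * π + 3 * π - 3 * θ - b)) ≤
      ∫ x in (2 * k * π + π + θ)..b, h x * (sin x + sin θ) := by
  have hsinθ := sin_nonneg_of_nonneg_of_le_pi hθ₀ (by linarith [pi_pos])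
  have key := neg_mul_le_integral_mul_of_reflect (φ := fun x => sin x + sin θ)
    (r := 2 * k * π + 2 * π - θ) (M := 2)
    (by linarith) hrb zero_le_two hh hh_mono hh_nonneg (by fun_prop)
    (fun x _ => by linarith [neg_one_le_sin x])
    (fun x _ => by
      have hrefl : sin (2 * (2 * k * π + 2 * π - θ) - x) = -sin (x + 2 * θ) := by
        rw [show 2 * (2 * k * π + 2 * π - θ) - x = -(x + 2 * θ) + ((2 * k + 2 : ℕ) : ℤ) * (2 * π) by
          push_cast; ring, sin_add_int_mul_two_pi, sin_neg]
      simp only [hrefl]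
      linarith [sin_add_two_mul_le hθ₀ (by linarith [pi_pos]) x])
    (fun x hx => sin_add_sin_nonneg (k + 1 : ℕ) hθ₁ (by push_cast; linarith [hx.1])
      (by push_cast; linarith [hx.2]))
  convert key using 4
  ring

theorem intervalIntegrable_mul_sin_add_sin {h : ℝ → ℝ} {θ L B u v : ℝ}
    (hh : ContinuousOn h (Icc L B)) (hu : u ∈ Icc L B) (hv : v ∈ Icc L B) :
    IntervalIntegrable (fun x => h x * (sin x + sin θ)) volume u v :=
  ((hh.mul (by fun_prop)).mono (uIcc_subset_Icc hu hv)).intervalIntegrable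

theorem integral_mul_sin_add_sin_le_of_pi_div_two_le {θ b : ℝ} {h : ℝ → ℝ} (hθ : θ ≤ π / 2)
    (hb₁ : π / 2 ≤ b) (hb₂ : b ≤ π + θ) (hh : ContinuousOn h (Icc 0 b))
    (hh_nonneg : ∀ x ∈ Icc 0 b, 0 ≤ h x) :
    ∫ x in 0..π / 2, h x * (sin x + sin θ) ≤ ∫ x in 0..b, h x * (sin x + sin θ) := by
  have hπ := pi_pos
  rw [← integral_add_adjacent_intervals (b := π / 2)
    (intervalIntegrable_mul_sin_add_sin hh ⟨le_rfl, by linarith⟩ ⟨by linarith, hb₁⟩)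
    (intervalIntegrable_mul_sin_add_sin hh ⟨by linarith, hb₁⟩ ⟨by linarith, le_rfl⟩),
    le_add_iff_nonneg_right]
  refine integral_nonneg hb₁ fun x hx => mul_nonneg (hh_nonneg x ⟨by linarith [hx.1], hx.2⟩) ?_
  exact sin_add_sin_nonneg 0 hθ (by push_cast; linarith [hx.1]) (by push_cast; linarith [hx.2])

theorem integral_mul_sin_add_sin_le_at_period_start {θ B : ℝ} {h : ℝ → ℝ} (hθ₀ : 0 ≤ θ)
    (hθ₁ : θ ≤ π / 2) (hh : ContinuousOn h (Icc 0 B)) (hh_mono : MonotoneOn h (Icc 0 B))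
    (hh_nonneg : ∀ x ∈ Icc 0 B, 0 ≤ h x) (k : ℕ) (hk : 2 * k * π + π + θ ≤ B) :
    ∫ x in 0..π / 2, h x * (sin x + sin θ) ≤
      ∫ x in 0..2 * k * π + π + θ, h x * (sin x + sin θ) := by
  have hπ := pi_pos
  induction k with
  | zero =>
    simp only [CharP.cast_eq_zero, mul_zero, zero_mul, zero_add] at hk ⊢
    exact integral_mul_sin_add_sin_le_of_pi_div_two_le hθ₁ (by linarith) le_rfl
      (hh.mono (Icc_subset_Icc le_rfl hk)) fun x hx => hh_nonneg x ⟨hx.1, hx.2.trans hk⟩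
  | succ k ih =>
    set L := 2 * (k : ℝ) * π + π + θ
    have hL₀ : 0 ≤ L := by positivity
    have hLk : 2 * ((k + 1 : ℕ) : ℝ) * π + π + θ = L + 2 * π := by push_cast; ring
    rw [hLk] at hk ⊢
    have hsub : Icc L (L + 2 * π) ⊆ Icc 0 B := Icc_subset_Icc hL₀ hk
    have hperiod := neg_le_integral_mul_sin_add_sin_period k hθ₀ hθ₁ (b := L + 2 * π)
      (by linarith) (by linarith) (hh.mono hsub) (hh_mono.mono hsub)
      fun x hx => hh_nonneg x (hsub hx)
    rw [max_eq_left (by linarith), mul_zero, neg_zero] at hperiod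
    rw [← integral_add_adjacent_intervals (b := L)
      (intervalIntegrable_mul_sin_add_sin hh ⟨le_rfl, by linarith⟩ ⟨hL₀, by linarith⟩)
      (intervalIntegrable_mul_sin_add_sin hh ⟨hL₀, by linarith⟩ ⟨by linarith, hk⟩)]
    linarith [ih (by linarith)]

theorem exists_eventually_le_integral_mul_sin_add_sin {θ a : ℝ} {h : ℝ → ℝ} (n : ℕ)
    (hθ₀ : 0 ≤ θ) (hθ₁ : θ ≤ π / 2) (ha : a = 2 * n * π + π + θ) (hh : ContinuousOn h (Ico 0 a))
    (hh_mono : MonotoneOn h (Ico 0 a)) (hh_nonneg : ∀ x ∈ Ico 0 a, 0 ≤ h x) :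
    ∃ C, ∀ᶠ b in 𝓝[<] a, (∫ x in 0..π / 2, h x * (sin x + sin θ)) - C * (a - b) ≤
      ∫ x in 0..b, h x * (sin x + sin θ) := by
  have hπ := pi_pos
  cases n with
  | zero =>
    have ha' : a = π + θ := by simpa using ha
    refine ⟨0, ?_⟩
    filter_upwards [Ioo_mem_nhdsLT (show π / 2 < a by linarith)] with b hb
    have hsubb : Icc 0 b ⊆ Ico 0 a := Icc_subset_Ico_right hb.2
    rw [zero_mul, sub_zero]
    exact integral_mul_sin_add_sin_le_of_pi_div_two_le hθ₁ hb.1.le (by linarith [hb.2])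
      (hh.mono hsubb) fun x hx => hh_nonneg x (hsubb hx)
  | succ m =>
    set L := 2 * (m : ℝ) * π + π + θ with hL
    set r := 2 * (m : ℝ) * π + 2 * π - θ with hr_def
    have haL : a = L + 2 * π := by rw [ha]; push_cast; ring
    have hL₀ : 0 ≤ L := by positivity
    refine ⟨2 * h r, ?_⟩
    filter_upwards [Ioo_mem_nhdsLT (show r < a by linarith)] with b hb
    have hsubb : Icc 0 b ⊆ Ico 0 a := Icc_subset_Ico_right hb.2
    have hstart := integral_mul_sin_add_sin_le_at_period_start hθ₀ hθ₁ (hh.mono hsubb)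
      (hh_mono.mono hsubb) (fun x hx => hh_nonneg x (hsubb hx)) m (by linarith [hb.1])
    have hsubL : Icc L b ⊆ Icc 0 b := Icc_subset_Icc hL₀ le_rfl
    have hperiod := neg_le_integral_mul_sin_add_sin_period m hθ₀ hθ₁ hb.1.le (by linarith [hb.2])
      ((hh.mono hsubb).mono hsubL) ((hh_mono.mono hsubb).mono hsubL)
      fun x hx => hh_nonneg x (hsubb (hsubL hx))
    rw [← hL] at hstart hperiod
    rw [← hr_def] at hperiod
    have hr : 0 ≤ h r := hh_nonneg r ⟨by linarith, by linarith⟩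
    have hmax : 2 * h r * max 0 (2 * m * π + 3 * π - 3 * θ - b) ≤ 2 * h r * (a - b) :=
      mul_le_mul_of_nonneg_left (max_le (by linarith [hb.2]) (by linarith)) (by positivity)
    rw [← integral_add_adjacent_intervals (b := L)
      (intervalIntegrable_mul_sin_add_sin (hh.mono hsubb) ⟨le_rfl, by linarith [hb.1]⟩
        ⟨hL₀, by linarith [hb.1]⟩)
      (intervalIntegrable_mul_sin_add_sin (hh.mono hsubb) ⟨hL₀, by linarith [hb.1]⟩
        ⟨by linarith [hb.1], le_rfl⟩)]
    linarith

theorem integral_mul_sin_add_sin_pos {h : ℝ → ℝ} {θ : ℝ} (hsinθ : 0 ≤ sin θ)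
    (hh : ContinuousOn h (Icc 0 (π / 2))) (hh_pos : ∀ x ∈ Ioo 0 (π / 2), 0 < h x) :
    0 < ∫ x in 0..π / 2, h x * (sin x + sin θ) := by
  have hπ := pi_pos
  refine intervalIntegral.intervalIntegral_pos_of_pos_on
    (intervalIntegrable_mul_sin_add_sin hh (left_mem_Icc.2 (by linarith))
      (right_mem_Icc.2 (by linarith))) (fun x hx => ?_) (by linarith)
  exact mul_pos (hh_pos x hx) (by linarith [sin_pos_of_pos_of_lt_pi hx.1 (by linarith [hx.2])])

theorem sin_add_sin_le_sub {θ a b : ℝ} (hsin : sin a = -sin θ) (hba : b ≤ a) :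
    sin b + sin θ ≤ a - b := by
  have := (le_abs_self _).trans (abs_sin_sub_sin_le b a)
  rw [abs_of_nonpos (by linarith), hsin] at this
  linarith

theorem mul_sub_le_integral_of_monotoneOn {g : ℝ → ℝ} {a b : ℝ} (hba : b ≤ a)
    (hg_mono : MonotoneOn g (Ico b a)) (hg : IntervalIntegrable g volume b a) :
    g b * (a - b) ≤ ∫ x in b..a, g x := by
  rcases hba.eq_or_lt with rfl | hba
  · simp
  calc g b * (a - b) = ∫ _ in b..a, g b := by
        rw [intervalIntegral.integral_const, smul_eq_mul]; ring
    _ ≤ ∫ x in b..a, g x := integral_mono_on_of_le_Ioo hba.le intervalIntegrable_const hg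
        fun x hx => hg_mono ⟨le_rfl, hba⟩ (Ioo_subset_Ico_self hx) hx.1.le

theorem tendsto_intervalIntegral_nhdsLT {f : ℝ → ℝ} {c a : ℝ} (hca : c < a)
    (hf : IntegrableOn f (Ico c a)) :
    Tendsto (fun b => ∫ x in c..b, f x) (𝓝[<] a) (𝓝 (∫ x in c..a, f x)) := by
  rw [← integrableOn_Icc_iff_integrableOn_Ico, ← uIcc_of_le hca.le] at hf
  have hmem : uIcc c a ∈ 𝓝[<] a := by
    rw [uIcc_of_le hca.le]; exact mem_of_superset (Ico_mem_nhdsLT hca) Ico_subset_Icc_self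
  exact ((continuousOn_primitive_interval hf a right_mem_uIcc).mono_of_mem_nhdsWithin hmem).tendsto

theorem tendsto_intervalIntegral_tail_nhdsLT {f : ℝ → ℝ} {c a : ℝ} (hca : c < a)
    (hf : IntegrableOn f (Ico c a)) :
    Tendsto (fun b => ∫ x in b..a, f x) (𝓝[<] a) (𝓝 0) := by
  have hfa : IntervalIntegrable f volume c a := by
    rw [intervalIntegrable_iff_integrableOn_Ico_of_le hca.le]; exact hf
  rw [← sub_self (∫ x in c..a, f x)]
  refine (tendsto_const_nhds.sub (tendsto_intervalIntegral_nhdsLT hca hf)).congr' ?_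
  filter_upwards [Ico_mem_nhdsLT hca] with b hb
  exact intervalIntegral.integral_interval_sub_left hfa
    (hfa.mono_set (uIcc_subset_uIcc left_mem_uIcc (Icc_subset_uIcc (Ico_subset_Icc_self hb))))

theorem integral_mul_cos_le {g h : ℝ → ℝ} {θ a b : ℝ} (hsin : sin a = -sin θ) (hsinθ : 0 ≤ sin θ)
    (hb₀ : 0 ≤ b) (hba : b ≤ a) (hg : ContinuousOn g (Icc 0 b))
    (hgh : ∀ x ∈ Ioo 0 b, HasDerivAt g (h x) x) (hh : ContinuousOn h (Icc 0 b))
    (hg_nonneg : 0 ≤ g 0) (hg_mono : MonotoneOn g (Ico b a)) (hgb : 0 ≤ g b)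
    (hg_int : IntervalIntegrable g volume b a) :
    ∫ t in 0..b, g t * cos t ≤ (∫ t in b..a, g t) - ∫ t in 0..b, h t * (sin t + sin θ) := by
  have hparts := intervalIntegral.integral_mul_deriv_eq_deriv_mul_of_hasDerivAt
    (u := g) (v := fun t => sin t + sin θ) (u' := h) (v' := cos)
    (by rwa [uIcc_of_le hb₀]) (by fun_prop) (by rwa [min_eq_left hb₀, max_eq_right hb₀])
    (fun x _ => by simpa using hasDerivAt_sin x)
    (hh.intervalIntegrable_of_Icc hb₀) (continuous_cos.intervalIntegrable 0 b)
  rw [hparts, sin_zero, zero_add]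
  have hboundary : g b * (sin b + sin θ) ≤ g b * (a - b) :=
    mul_le_mul_of_nonneg_left (sin_add_sin_le_sub hsin hba) hgb
  linarith [mul_sub_le_integral_of_monotoneOn hba hg_mono hg_int, mul_nonneg hg_nonneg hsinθ]

theorem integral_mul_cos_le_of_eventually_le {g h : ℝ → ℝ} {θ a δ C : ℝ} (ha : 0 < a)
    (hsin : sin a = -sin θ) (hsinθ : 0 ≤ sin θ) (hg_pos : ∀ t ∈ Ico 0 a, 0 < g t)
    (hg_mono : MonotoneOn g (Ico 0 a)) (hg : ContinuousOn g (Ico 0 a))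
    (hg_int : IntegrableOn g (Ico 0 a)) (hgh : ∀ x ∈ Ioo 0 a, HasDerivAt g (h x) x)
    (hh : ContinuousOn h (Ico 0 a))
    (hδ : ∀ᶠ b in 𝓝[<] a, δ - C * (a - b) ≤ ∫ x in 0..b, h x * (sin x + sin θ)) :
    ∫ t in 0..a, g t * cos t ≤ -δ := by
  have hbound : ∀ᶠ b in 𝓝[<] a,
      ∫ t in 0..b, g t * cos t ≤ (∫ t in b..a, g t) - (δ - C * (a - b)) := by
    filter_upwards [hδ, Ioo_mem_nhdsLT ha] with b hδb hb
    have hsub : Icc 0 b ⊆ Ico 0 a := Icc_subset_Ico_right hb.2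
    have hg_int' : IntervalIntegrable g volume b a := by
      rw [intervalIntegrable_iff_integrableOn_Ico_of_le hb.2.le]
      exact hg_int.mono_set (Ico_subset_Ico_left hb.1.le)
    refine (integral_mul_cos_le hsin hsinθ hb.1.le hb.2.le (hg.mono hsub)
      (fun x hx => hgh x ⟨hx.1, hx.2.trans hb.2⟩) (hh.mono hsub) (hg_pos 0 ⟨le_rfl, ha⟩).le
      (hg_mono.mono (Ico_subset_Ico_left hb.1.le)) (hg_pos b ⟨hb.1.le, hb.2⟩).le
      hg_int').trans (by linarith)
  have hlim : Tendsto (fun b => (∫ t in b..a, g t) - (δ - C * (a - b))) (𝓝[<] a)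
      (𝓝 (0 - (δ - 0))) :=
    (tendsto_intervalIntegral_tail_nhdsLT ha hg_int).sub (tendsto_const_nhds.sub
      ((by fun_prop : Continuous fun b => C * (a - b)).tendsto' a 0 (by ring)
        |>.mono_left nhdsWithin_le_nhds))
  have hgcos : IntegrableOn (fun t => g t * cos t) (Ico 0 a) :=
    hg_int.mul_bdd continuous_cos.aestronglyMeasurable
      (ae_of_all _ fun t => (norm_eq_abs _).trans_le (abs_cos_le_one t))
  have := le_of_tendsto_of_tendsto (tendsto_intervalIntegral_nhdsLT ha hgcos) hlim hbound
  linarith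

theorem cos_integral_neg_of_increasing
    (a θ : ℝ) (n : ℕ)
    (g : ℝ → ℝ)
    (hg_pos : ∀ t ∈ Ico (0 : ℝ) a, 0 < g t)
    (hg_C1 : ContDiffOn ℝ 1 g (Ico 0 a))
    (hg_int : IntegrableOn g (Ico 0 a))
    (hg_mono : StrictMonoOn g (Ico 0 a))
    (hg'_mono : StrictMonoOn (derivWithin g (Ico 0 a)) (Ico 0 a))
    (hθ₀ : 0 ≤ θ) (hθ₁ : θ ≤ π / 2)
    (ha : a = 2 * n * π + π + θ) :
    (∫ t in (0 : ℝ)..a, g t * Real.cos t) < 0 := by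
  have hπ := pi_pos
  have ha₀ : π / 2 < a := by rw [ha]; linarith [show 0 ≤ 2 * (n : ℝ) * π by positivity]
  set h := derivWithin g (Ico 0 a)
  have hh_nonneg : ∀ x ∈ Ico 0 a, 0 ≤ h x := fun _ _ => hg_mono.monotoneOn.derivWithin_nonneg
  have hh : ContinuousOn h (Ico 0 a) :=
    hg_C1.continuousOn_derivWithin (uniqueDiffOn_Ico 0 a) le_rfl
  have hgh : ∀ x ∈ Ioo 0 a, HasDerivAt g (h x) x := fun x hx =>
    (hg_C1.differentiableOn one_ne_zero x (Ioo_subset_Ico_self hx)).hasDerivWithinAt.hasDerivAt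
      (Ico_mem_nhds hx.1 hx.2)
  have hsinθ : 0 ≤ sin θ := sin_nonneg_of_nonneg_of_le_pi hθ₀ (by linarith)
  have hsin : sin a = -sin θ := by
    rw [ha, show 2 * n * π + π + θ = θ + π + (n : ℤ) * (2 * π) by push_cast; ring,
      sin_add_int_mul_two_pi, sin_add_pi]
  have hδ := integral_mul_sin_add_sin_pos hsinθ (hh.mono (Icc_subset_Ico_right ha₀))
    fun x hx => (hh_nonneg 0 ⟨le_rfl, by linarith⟩).trans_lt
      (hg'_mono ⟨le_rfl, by linarith⟩ ⟨hx.1.le, by linarith [hx.2]⟩ hx.1)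
  obtain ⟨C, hC⟩ := exists_eventually_le_integral_mul_sin_add_sin n hθ₀ hθ₁ ha hh
    hg'_mono.monotoneOn hh_nonneg
  exact (integral_mul_cos_le_of_eventually_le (by linarith) hsin hsinθ hg_pos hg_mono.monotoneOn
    hg_C1.continuousOn hg_int hgh hh hC).trans_lt (neg_lt_zero.2 hδ)
end

section
/- Let g be a positive C¹ integrable function on [0,a) with g(0) = 0 such that both g and g' are strictly increasing on [0,a). If a = 2nπ + π/2 + θ for some nonnegative integer n and 0 ≤ θ ≤ π/2, then ∫₀ᵃ g(t) sin t dt > 0. -/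
/-!
Since `g'` is increasing, `g` is convex. Split `[0, a]` at `π/2` and `b = π/2 + 2nπ`: on
`[0, π/2]` the integrand is positive and on `[b, a] ⊆ [2nπ, 2nπ + π]` it is nonnegative.
The middle part consists of `n` periods `[c, c + 2π]` with `sin c = 1`. Writing
`G s = g (c + s)` and folding with `s ↦ 2π - s` and then `s ↦ π - s`, each period contributes
`∫₀^{π/2} (G s + G (2π - s) - G (π - s) - G (π + s)) cos s`, which is nonnegative by
convexity of `G` since `s ≤ π - s ≤ π + s ≤ 2π - s`.
-/

open Real Set MeasureTheory

theorem MonotoneOn.convexOn_of_derivWithin {D : Set ℝ} (hD : Convex ℝ D) {f : ℝ → ℝ}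
    (hf : ContinuousOn f D) (hf' : DifferentiableOn ℝ f (interior D))
    (hf'_mono : MonotoneOn (derivWithin f D) (interior D)) : ConvexOn ℝ D f :=
  (hf'_mono.congr fun _ hx =>
    derivWithin_of_mem_nhds (mem_interior_iff_mem_nhds.mp hx)).convexOn_of_deriv hD hf hf'

theorem ConvexOn.add_le_add_of_add_eq {s : Set ℝ} {f : ℝ → ℝ} (hf : ConvexOn ℝ s f)
    {x y z w : ℝ} (hx : x ∈ s) (hw : w ∈ s) (hxy : x ≤ y) (hyw : y ≤ w)
    (hsum : y + z = x + w) :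
    f y + f z ≤ f x + f w := by
  rcases hxy.eq_or_lt with rfl | hxy
  · obtain rfl : z = w := by linarith
    rfl
  have hwx : 0 < w - x := by linarith
  set t := (w - y) / (w - x)
  have ht₀ : 0 ≤ t := div_nonneg (by linarith) hwx.le
  have ht₁ : t ≤ 1 := (div_le_one hwx).mpr (by linarith)
  have hy : y = t * x + (1 - t) * w := by simp only [t]; field_simp; ring
  have hz : z = (1 - t) * x + t * w := by linarith
  have hfy := hf.2 hx hw ht₀ (sub_nonneg.mpr ht₁) (by ring)
  have hfz := hf.2 hx hw (sub_nonneg.mpr ht₁) ht₀ (by ring)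
  simp only [smul_eq_mul, ← hy, ← hz] at hfy hfz
  linarith

theorem intervalIntegral.integral_nonneg_of_nonneg_on_Ioo {f : ℝ → ℝ} {a b : ℝ}
    (hab : a ≤ b) (hf : ∀ x ∈ Ioo a b, 0 ≤ f x) : 0 ≤ ∫ x in a..b, f x := by
  rw [intervalIntegral.integral_of_le hab, integral_Ioc_eq_integral_Ioo]
  exact setIntegral_nonneg measurableSet_Ioo hf

theorem intervalIntegral.integral_zero_two_mul_eq_integral_add_comp_sub {F : ℝ → ℝ} {c : ℝ}
    (hc : 0 ≤ c) (hF : IntervalIntegrable F volume 0 (2 * c)) :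
    ∫ x in 0..2 * c, F x = ∫ x in 0..c, (F x + F (2 * c - x)) := by
  have h₁ : IntervalIntegrable F volume 0 c :=
    hF.mono_set (uIcc_subset_uIcc_left (mem_uIcc_of_le hc (by linarith)))
  have h₂ : IntervalIntegrable F volume c (2 * c) :=
    hF.mono_set (uIcc_subset_uIcc_right (mem_uIcc_of_le hc (by linarith)))
  have h₂' : IntervalIntegrable (fun x => F (2 * c - x)) volume 0 c := by
    simpa [two_mul] using (h₂.comp_sub_left (2 * c)).symm
  rw [intervalIntegral.integral_add h₁ h₂', intervalIntegral.integral_comp_sub_left,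
    ← intervalIntegral.integral_add_adjacent_intervals h₁ h₂]
  congr 2 <;> ring

theorem integral_mul_cos_nonneg_of_convexOn {G : ℝ → ℝ} (hG : ConvexOn ℝ (Ioo 0 (2 * π)) G)
    (hint : IntervalIntegrable G volume 0 (2 * π)) :
    0 ≤ ∫ s in 0..2 * π, G s * cos s := by
  set H := fun s => G s + G (2 * π - s)
  have hH : IntervalIntegrable H volume 0 π := by
    refine (hint.add ?_).mono_set (uIcc_subset_uIcc_left ?_)
    · simpa using (hint.comp_sub_left (2 * π)).symm
    · exact mem_uIcc_of_le pi_pos.le (by linarith [pi_pos])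
  have hfold :
      ∫ s in 0..2 * π, G s * cos s = ∫ s in 0..π / 2, (H s - H (π - s)) * cos s := by
    rw [intervalIntegral.integral_zero_two_mul_eq_integral_add_comp_sub pi_pos.le
      (hint.mul_continuousOn continuous_cos.continuousOn)]
    have hπ : π = 2 * (π / 2) := by ring
    simp only [cos_two_pi_sub, ← add_mul]
    conv_lhs => rw [hπ]
    rw [intervalIntegral.integral_zero_two_mul_eq_integral_add_comp_sub (by positivity)
      (by rw [← hπ]; exact hH.mul_continuousOn continuous_cos.continuousOn)]
    simp only [← hπ, cos_pi_sub]
    congr 1 with s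
    ring
  rw [hfold]
  refine intervalIntegral.integral_nonneg_of_nonneg_on_Ioo (by positivity)
    fun s ⟨hs₀, hs₁⟩ => ?_
  refine mul_nonneg ?_ (cos_nonneg_of_neg_pi_div_two_le_of_le (by linarith) hs₁.le)
  have hconv := hG.add_le_add_of_add_eq (x := s) (y := π - s) (z := π + s) (w := 2 * π - s)
    ⟨hs₀, by linarith⟩ ⟨by linarith, by linarith⟩ (by linarith) (by linarith) (by ring)
  simp only [H, show 2 * π - (π - s) = π + s by ring]
  linarith

theorem integral_mul_sin_nonneg_of_convexOn {g : ℝ → ℝ} {c : ℝ} (hc : sin c = 1)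
    (hg : ConvexOn ℝ (Ioo c (c + 2 * π)) g) (hint : IntervalIntegrable g volume c (c + 2 * π)) :
    0 ≤ ∫ t in c..c + 2 * π, g t * sin t := by
  have hcos : cos c = 0 := by nlinarith [sin_sq_add_cos_sq c]
  have hshift : ∫ t in c..c + 2 * π, g t * sin t = ∫ s in 0..2 * π, g (c + s) * cos s := by
    have hsub := intervalIntegral.integral_comp_add_left (fun t => g t * sin t) c
      (a := 0) (b := 2 * π)
    rw [add_zero] at hsub
    rw [← hsub]
    refine intervalIntegral.integral_congr fun s _ => ?_
    simp only [sin_add, hc, hcos]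
    ring
  have hpre : (c + ·) ⁻¹' Ioo c (c + 2 * π) = Ioo 0 (2 * π) := by ext s; simp
  rw [hshift]
  refine integral_mul_cos_nonneg_of_convexOn ?_ (by simpa using hint.comp_add_left c)
  exact hpre ▸ hg.translate_right c

theorem integral_mul_sin_nonneg_of_convexOn_of_nat {g : ℝ → ℝ} {c : ℝ} (hc : sin c = 1)
    (n : ℕ) (hg : ConvexOn ℝ (Ioo c (c + n * (2 * π))) g)
    (hint : IntervalIntegrable g volume c (c + n * (2 * π))) :
    0 ≤ ∫ t in c..c + n * (2 * π), g t * sin t := by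
  set p : ℕ → ℝ := fun k => c + k * (2 * π)
  have hp0 : p 0 = c := by simp [p]
  have hp_succ (k : ℕ) : p (k + 1) = p k + 2 * π := by simp only [p]; push_cast; ring
  have hp_mono : Monotone p := fun i j hij => by simp only [p]; gcongr
  replace hint : IntervalIntegrable g volume (p 0) (p n) := by rw [hp0]; exact hint
  replace hg : ConvexOn ℝ (Ioo (p 0) (p n)) g := by rw [hp0]; exact hg
  have hint_k {k : ℕ} (hk : k < n) : IntervalIntegrable g volume (p k) (p (k + 1)) := by
    refine hint.mono_set ?_
    rw [uIcc_of_le (hp_mono k.le_succ), uIcc_of_le (hp_mono n.zero_le)]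
    exact Icc_subset_Icc (hp_mono k.zero_le) (hp_mono hk)
  calc 0 ≤ ∑ k ∈ Finset.range n, ∫ t in p k..p (k + 1), g t * sin t :=
        Finset.sum_nonneg fun k hk => by
          have hk := Finset.mem_range.mp hk
          have hconv : ConvexOn ℝ (Ioo (p k) (p (k + 1))) g := hg.subset
            (Ioo_subset_Ioo (hp_mono k.zero_le) (hp_mono hk)) (convex_Ioo _ _)
          rw [hp_succ] at hconv ⊢
          exact integral_mul_sin_nonneg_of_convexOn (by simp [p, sin_add_nat_mul_two_pi, hc])
            hconv (hp_succ k ▸ hint_k hk)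
    _ = ∫ t in p 0..p n, g t * sin t := intervalIntegral.sum_integral_adjacent_intervals
          fun k hk => (hint_k hk).mul_continuousOn continuous_sin.continuousOn
    _ = ∫ t in c..c + n * (2 * π), g t * sin t := by rw [hp0]

theorem integral_mul_sin_pos_of_convexOn {g : ℝ → ℝ} {a : ℝ} (n : ℕ)
    (ha₀ : π / 2 + n * (2 * π) ≤ a) (ha₁ : a ≤ π + n * (2 * π))
    (hg_pos : ∀ t ∈ Ioo 0 a, 0 < g t) (hg : ConvexOn ℝ (Ioo 0 a) g)
    (hint : IntervalIntegrable g volume 0 a) :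
    0 < ∫ t in 0..a, g t * sin t := by
  set b := π / 2 + n * (2 * π) with hb
  have hπb : π / 2 ≤ b := le_add_of_nonneg_right (by positivity)
  have hgs_int {p q : ℝ} (hp : 0 ≤ p) (hpq : p ≤ q) (hq : q ≤ a) :
      IntervalIntegrable (fun t => g t * sin t) volume p q :=
    (hint.mul_continuousOn continuous_sin.continuousOn).mono_set
      (uIcc_subset_uIcc (mem_uIcc_of_le hp (hpq.trans hq)) (mem_uIcc_of_le (hp.trans hpq) hq))
  have h_head : 0 < ∫ t in 0..π / 2, g t * sin t :=
    intervalIntegral.intervalIntegral_pos_of_pos_on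
      (hgs_int le_rfl (by positivity) (by linarith))
      (fun t ht => mul_pos (hg_pos t ⟨ht.1, by linarith [ht.2]⟩)
        (sin_pos_of_pos_of_lt_pi ht.1 (by linarith [ht.2, pi_pos])))
      (by positivity)
  have h_periods : 0 ≤ ∫ t in π / 2..b, g t * sin t :=
    integral_mul_sin_nonneg_of_convexOn_of_nat sin_pi_div_two n
      (hg.subset (Ioo_subset_Ioo (by positivity) ha₀) (convex_Ioo _ _))
      (hint.mono_set (uIcc_subset_uIcc (mem_uIcc_of_le (by positivity) (hπb.trans ha₀))
        (mem_uIcc_of_le (by positivity) ha₀)))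
  have h_tail : 0 ≤ ∫ t in b..a, g t * sin t := by
    refine intervalIntegral.integral_nonneg_of_nonneg_on_Ioo ha₀ fun t ⟨hbt, hta⟩ =>
      mul_nonneg (hg_pos t ⟨by linarith [pi_pos], hta⟩).le ?_
    rw [← sin_sub_nat_mul_two_pi t n]
    exact sin_nonneg_of_nonneg_of_le_pi (by linarith) (by linarith)
  rw [← intervalIntegral.integral_add_adjacent_intervals (hgs_int le_rfl (by positivity) ha₀)
    (hgs_int (by positivity) ha₀ le_rfl), ← intervalIntegral.integral_add_adjacent_intervals
    (hgs_int le_rfl (by positivity) (hπb.trans ha₀)) (hgs_int (by positivity) hπb ha₀)]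
  linarith

theorem sin_integral_pos_of_increasing_general
    (a θ : ℝ) (n : ℕ)
    (g : ℝ → ℝ)
    (hg_pos : ∀ t ∈ Ioo (0 : ℝ) a, 0 < g t)
    (hg_C1 : ContDiffOn ℝ 1 g (Ico 0 a))
    (hg_int : IntegrableOn g (Ico 0 a))
    (hg'_mono : StrictMonoOn (derivWithin g (Ico 0 a)) (Ico 0 a))
    (hθ₀ : 0 ≤ θ) (hθ₁ : θ ≤ π / 2)
    (ha : a = 2 * n * π + π / 2 + θ) :
    0 < ∫ t in (0 : ℝ)..a, g t * Real.sin t := by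
  have ha₀ : π / 2 + n * (2 * π) ≤ a := by rw [ha]; linarith
  have ha₁ : a ≤ π + n * (2 * π) := by rw [ha]; linarith
  have hg_conv : ConvexOn ℝ (Ico 0 a) g :=
    (hg'_mono.monotoneOn.mono interior_subset).convexOn_of_derivWithin (convex_Ico 0 a)
      hg_C1.continuousOn ((hg_C1.differentiableOn one_ne_zero).mono interior_subset)
  have ha_nonneg : 0 ≤ a := by rw [ha]; positivity
  have hg_int' : IntervalIntegrable g volume 0 a :=
    (intervalIntegrable_iff_integrableOn_Ico_of_le ha_nonneg).mpr hg_int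
  exact integral_mul_sin_pos_of_convexOn n ha₀ ha₁ hg_pos
    (hg_conv.subset Ioo_subset_Ico_self (convex_Ioo 0 a)) hg_int'

theorem sin_integral_pos_of_increasing
    (a θ : ℝ) (n : ℕ)
    (g : ℝ → ℝ)
    (hg_pos : ∀ t ∈ Ioo (0 : ℝ) a, 0 < g t)
    (hg_C1 : ContDiffOn ℝ 1 g (Ico 0 a))
    (hg_int : IntegrableOn g (Ico 0 a))
    (hg_mono : StrictMonoOn g (Ico 0 a))
    (hg'_mono : StrictMonoOn (derivWithin g (Ico 0 a)) (Ico 0 a))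
    (hθ₀ : 0 ≤ θ) (hθ₁ : θ ≤ π / 2)
    (hg0 : g 0 = 0)
    (ha : a = 2 * n * π + π / 2 + θ) :
    0 < ∫ t in (0 : ℝ)..a, g t * Real.sin t :=
  sin_integral_pos_of_increasing_general a θ n g hg_pos hg_C1 hg_int hg'_mono hθ₀ hθ₁ ha
end

section
/- Let g be a positive C¹ integrable function on [0,a) with g(0) = 0 such that both g and g' are strictly increasing on [0,a). If a = 2nπ + 3π/2 + θ for some nonnegative integer n and 0 ≤ θ ≤ π/2, then ∫₀ᵃ g(t) sin t dt < 0. -/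
/-!
Write `f` for the derivative of `g`. Integrating by parts on `[0, b]` with `b = 2nπ + 3π/2 - δ`
and bounding the tail on `[b, a]`, where `sin ≤ 0` and `g ≥ g b`, gives
`∫₀ᵃ g sin ≤ ∫₀ᵇ f cos - g b * cos a ≤ ∫₀ᵇ f cos`. The cut below `a` is needed because `f` may
blow up at `a`.

For increasing `f`, on an interval where `cos` changes sign once, from `+` to `-`, at `p`, the
integral of `f cos` is at most `f p` times the integral of `cos`. Hence `[0, 3π/2]` contributes
at most `-f (π/2)`, every later full period at most `0`, and the last incomplete one at most
`f (2nπ + π/2) * (1 - cos δ)`, which is small for small `δ`. Finally `f (π/2) > f 0 ≥ 0`.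
-/

open Real Set MeasureTheory intervalIntegral Filter Topology

theorem cos_two_mul_nat_mul_pi_add_three_pi_div_two_add (n : ℕ) (s : ℝ) :
    cos (2 * n * π + 3 * π / 2 + s) = sin s := by
  rw [show 2 * n * π + 3 * π / 2 + s = s - π / 2 + (n + 1 : ℕ) * (2 * π) by push_cast; ring,
    cos_add_nat_mul_two_pi, cos_sub_pi_div_two]

theorem sin_two_mul_nat_mul_pi_add_three_pi_div_two_add (n : ℕ) (s : ℝ) :
    sin (2 * n * π + 3 * π / 2 + s) = -cos s := by
  rw [show 2 * n * π + 3 * π / 2 + s = s - π / 2 + (n + 1 : ℕ) * (2 * π) by push_cast; ring,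
    sin_add_nat_mul_two_pi, sin_sub_pi_div_two]

theorem sin_nonpos_of_two_mul_nat_mul_pi_add_pi_le (n : ℕ) {t : ℝ} (h₁ : 2 * n * π + π ≤ t)
    (h₂ : t ≤ 2 * n * π + 2 * π) : sin t ≤ 0 := by
  rw [← sin_sub_nat_mul_two_pi t (n + 1)]
  exact sin_nonpos_of_nonpos_of_neg_pi_le (by push_cast; linarith) (by push_cast; linarith)

theorem MonotoneOn.intervalIntegrable_mul {F w : ℝ → ℝ} {x y : ℝ} (hxy : x ≤ y)
    (hF : MonotoneOn F (Icc x y)) (hw : Continuous w) :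
    IntervalIntegrable (fun s ↦ F s * w s) volume x y := by
  rw [← uIcc_of_le hxy] at hF
  exact hF.intervalIntegrable.mul_continuousOn hw.continuousOn

theorem MonotoneOn.integral_mul_le_mul_integral_of_sign_change {F w : ℝ → ℝ} {x p y : ℝ}
    (hxp : x ≤ p) (hpy : p ≤ y) (hF : MonotoneOn F (Icc x y)) (hw : Continuous w)
    (hw_nonneg : ∀ s ∈ Icc x p, 0 ≤ w s) (hw_nonpos : ∀ s ∈ Icc p y, w s ≤ 0) :
    ∫ s in x..y, F s * w s ≤ F p * ∫ s in x..y, w s := by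
  have hxy : x ≤ y := hxp.trans hpy
  have hp : p ∈ Icc x y := ⟨hxp, hpy⟩
  rw [← intervalIntegral.integral_const_mul]
  refine integral_mono_on hxy (hF.intervalIntegrable_mul hxy hw)
    ((hw.const_mul _).intervalIntegrable _ _) fun s hs ↦ ?_
  rcases le_total s p with hsp | hps
  · exact mul_le_mul_of_nonneg_right (hF hs hp hsp) (hw_nonneg s ⟨hs.1, hsp⟩)
  · exact mul_le_mul_of_nonpos_right (hF hp hs hps) (hw_nonpos s ⟨hps, hs.2⟩)

theorem MonotoneOn.integral_mul_le_mul_integral_of_nonpos {F w : ℝ → ℝ} {x y : ℝ}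
    (hxy : x ≤ y) (hF : MonotoneOn F (Ico x y))
    (hFw : IntervalIntegrable (fun s ↦ F s * w s) volume x y)
    (hw : Continuous w) (hw_nonpos : ∀ s ∈ Ioo x y, w s ≤ 0) :
    ∫ s in x..y, F s * w s ≤ F x * ∫ s in x..y, w s := by
  rw [← intervalIntegral.integral_const_mul]
  refine integral_mono_on_of_le_Ioo hxy hFw ((hw.const_mul _).intervalIntegrable _ _)
    fun s hs ↦ mul_le_mul_of_nonpos_right ?_ (hw_nonpos s hs)
  exact hF ⟨le_rfl, hs.1.trans hs.2⟩ (Ioo_subset_Ico_self hs) hs.1.le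

theorem integral_mul_cos_le_of_monotoneOn_of_le_two_pi {F : ℝ → ℝ} (n : ℕ) {L : ℝ}
    (hπL : π ≤ L) (hL : L ≤ 2 * π)
    (hF : MonotoneOn F (Icc (2 * n * π + 3 * π / 2) (2 * n * π + 3 * π / 2 + L))) :
    ∫ s in (2 * n * π + 3 * π / 2)..(2 * n * π + 3 * π / 2 + L), F s * cos s
      ≤ F (2 * n * π + 3 * π / 2 + π) * (1 - cos L) := by
  set c : ℝ := 2 * n * π + 3 * π / 2
  have h := hF.integral_mul_le_mul_integral_of_sign_change (p := c + π) (by linarith)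
    (by linarith) continuous_cos
    (fun s hs ↦ by
      rw [← add_sub_cancel c s, cos_two_mul_nat_mul_pi_add_three_pi_div_two_add]
      exact sin_nonneg_of_nonneg_of_le_pi (by linarith [hs.1]) (by linarith [hs.2]))
    (fun s hs ↦ by
      rw [← add_sub_cancel c s, cos_two_mul_nat_mul_pi_add_three_pi_div_two_add,
        ← sin_sub_two_pi]
      exact sin_nonpos_of_nonpos_of_neg_pi_le (by linarith [hs.2]) (by linarith [hs.1]))
  have hsin_c : sin c = -1 := by
    simpa using sin_two_mul_nat_mul_pi_add_three_pi_div_two_add n 0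
  rwa [integral_cos, sin_two_mul_nat_mul_pi_add_three_pi_div_two_add, hsin_c, neg_sub_neg] at h

theorem integral_mul_cos_le_of_monotoneOn {F : ℝ → ℝ} (n : ℕ) {δ : ℝ} (hδ₀ : 0 ≤ δ)
    (hδ₁ : δ ≤ π) (hF : MonotoneOn F (Icc 0 (2 * n * π + 3 * π / 2 - δ))) :
    ∫ s in 0..(2 * n * π + 3 * π / 2 - δ), F s * cos s
      ≤ -F (π / 2) + F (2 * n * π + π / 2) * (1 - cos δ) := by
  have hπ := pi_pos
  induction n generalizing δ with
  | zero =>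
    simp only [Nat.cast_zero, mul_zero, zero_mul, zero_add] at hF ⊢
    have h := hF.integral_mul_le_mul_integral_of_sign_change (p := π / 2) (by linarith)
      (by linarith) continuous_cos (fun s hs ↦ cos_nonneg_of_mem_Icc ⟨by linarith [hs.1], hs.2⟩)
      (fun s hs ↦ cos_nonpos_of_pi_div_two_le_of_le hs.1 (by linarith [hs.2]))
    have hsin : sin (3 * π / 2 - δ) = -cos δ := by
      simpa [sub_eq_add_neg] using sin_two_mul_nat_mul_pi_add_three_pi_div_two_add 0 (-δ)
    rw [integral_cos, hsin, sin_zero] at h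
    linarith
  | succ n ih =>
    set c : ℝ := 2 * n * π + 3 * π / 2
    have hc₀ : 0 ≤ c := by positivity
    rw [show 2 * ((n + 1 : ℕ) : ℝ) * π + 3 * π / 2 - δ = c + (2 * π - δ) by push_cast; ring]
      at hF ⊢
    rw [show 2 * ((n + 1 : ℕ) : ℝ) * π + π / 2 = c + π by push_cast; ring]
    have hhead : ∫ s in 0..c, F s * cos s ≤ -F (π / 2) := by
      simpa using ih le_rfl hπ.le (hF.mono (Icc_subset_Icc le_rfl (by linarith)))
    have hperiod := integral_mul_cos_le_of_monotoneOn_of_le_two_pi n (L := 2 * π - δ)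
      (by linarith) (by linarith) (hF.mono (Icc_subset_Icc hc₀ le_rfl))
    rw [cos_two_pi_sub] at hperiod
    rw [← integral_add_adjacent_intervals
      ((hF.mono (Icc_subset_Icc le_rfl (by linarith))).intervalIntegrable_mul hc₀ continuous_cos)
      ((hF.mono (Icc_subset_Icc hc₀ le_rfl)).intervalIntegrable_mul (by linarith) continuous_cos)]
    linarith

theorem integral_mul_sin_eq_of_hasDerivAt {g g' : ℝ → ℝ} {x y : ℝ} (hxy : x ≤ y)
    (hg : ContinuousOn g (Icc x y)) (hg' : ∀ t ∈ Ioo x y, HasDerivAt g (g' t) t)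
    (hg'_int : IntervalIntegrable g' volume x y) :
    ∫ t in x..y, g t * sin t = g x * cos x - g y * cos y + ∫ t in x..y, g' t * cos t := by
  have h := integral_mul_deriv_eq_deriv_mul_of_hasDerivAt (v := fun t ↦ -cos t) (v' := sin)
    (by rwa [uIcc_of_le hxy]) continuous_cos.neg.continuousOn
    (by simpa [min_eq_left hxy, max_eq_right hxy] using hg')
    (fun t _ ↦ by simpa using (hasDerivAt_cos t).fun_neg) hg'_int
    (continuous_sin.intervalIntegrable _ _)
  simp only [mul_neg, intervalIntegral.integral_neg] at h
  linarith

theorem integral_mul_sin_le_of_hasDerivAt {g g' : ℝ → ℝ} {x b a : ℝ} (hxb : x ≤ b)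
    (hba : b ≤ a) (hg_cont : ContinuousOn g (Icc x b)) (hg' : ∀ t ∈ Ioo x b, HasDerivAt g (g' t) t)
    (hg'_int : IntervalIntegrable g' volume x b) (hg_mono : MonotoneOn g (Ico b a))
    (hint : IntervalIntegrable (fun t ↦ g t * sin t) volume x a)
    (hsin : ∀ t ∈ Ioo b a, sin t ≤ 0) :
    ∫ t in x..a, g t * sin t ≤ g x * cos x - g b * cos a + ∫ t in x..b, g' t * cos t := by
  have hb : b ∈ uIcc x a := mem_uIcc_of_le hxb hba
  have htail := hg_mono.integral_mul_le_mul_integral_of_nonpos hba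
    (hint.mono_set (uIcc_subset_uIcc hb right_mem_uIcc)) continuous_sin hsin
  rw [integral_sin] at htail
  rw [← integral_add_adjacent_intervals (hint.mono_set (uIcc_subset_uIcc left_mem_uIcc hb))
    (hint.mono_set (uIcc_subset_uIcc hb right_mem_uIcc)),
    integral_mul_sin_eq_of_hasDerivAt hxb hg_cont hg' hg'_int]
  linarith

theorem DifferentiableOn.hasDerivAt_derivWithin_Ico {g : ℝ → ℝ} {x y t : ℝ}
    (hg : DifferentiableOn ℝ g (Ico x y)) (ht : t ∈ Ioo x y) :
    HasDerivAt g (derivWithin g (Ico x y) t) t :=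
  (hg t (Ioo_subset_Ico_self ht)).hasDerivWithinAt.hasDerivAt (Ico_mem_nhds ht.1 ht.2)

theorem exists_mem_Ioc_mul_one_sub_cos_lt (C : ℝ) {ε r : ℝ} (hε : 0 < ε) (hr : 0 < r) :
    ∃ δ ∈ Ioc 0 r, C * (1 - cos δ) < ε := by
  have hsmall : Tendsto (fun δ ↦ C * (1 - cos δ)) (𝓝 0) (𝓝 0) := by
    have hcont : Continuous fun δ ↦ C * (1 - cos δ) := by fun_prop
    simpa using hcont.tendsto 0
  obtain ⟨δ, ⟨hδr, hδε⟩, hδ₀⟩ := ((eventually_le_nhds hr).and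
    (hsmall.eventually (gt_mem_nhds hε))).filter_mono nhdsWithin_le_nhds
    |>.and (self_mem_nhdsWithin : Ioi (0 : ℝ) ∈ 𝓝[>] 0) |>.exists
  exact ⟨δ, ⟨hδ₀, hδr⟩, hδε⟩

theorem sin_integral_neg_of_increasing_general
    (a θ : ℝ) (n : ℕ)
    (g : ℝ → ℝ)
    (hg_C1 : ContDiffOn ℝ 1 g (Ico 0 a))
    (hg_int : IntegrableOn g (Ico 0 a))
    (hg_mono : StrictMonoOn g (Ico 0 a))
    (hg'_mono : StrictMonoOn (derivWithin g (Ico 0 a)) (Ico 0 a))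
    (hθ₀ : 0 ≤ θ) (hθ₁ : θ ≤ π / 2)
    (hg0 : g 0 = 0)
    (ha : a = 2 * n * π + 3 * π / 2 + θ) :
    (∫ t in (0 : ℝ)..a, g t * Real.sin t) < 0 := by
  have hπ := pi_pos
  have hn : (0 : ℝ) ≤ 2 * n * π := by positivity
  set f := derivWithin g (Ico 0 a)
  have hf_pos : 0 < f (π / 2) := hg_mono.monotoneOn.derivWithin_nonneg.trans_lt
    (hg'_mono ⟨le_rfl, by linarith⟩ ⟨by linarith, by linarith⟩ (by linarith))
  obtain ⟨δ, ⟨hδ₀, hδπ⟩, hδ⟩ :=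
    exists_mem_Ioc_mul_one_sub_cos_lt (f (2 * n * π + π / 2)) hf_pos (half_pos hπ)
  set b := 2 * n * π + 3 * π / 2 - δ with hb
  have hb₀ : 0 ≤ b := by linarith
  have hb_a : b < a := by linarith
  have hsub : Icc 0 b ⊆ Ico 0 a := Icc_subset_Ico_right hb_a
  have hf_cos := integral_mul_cos_le_of_monotoneOn n hδ₀.le (by linarith)
    (hg'_mono.monotoneOn.mono hsub)
  have hg_sin := integral_mul_sin_le_of_hasDerivAt (g' := f) hb₀ hb_a.le
    (hg_C1.continuousOn.mono hsub)
    (fun t ht ↦ (hg_C1.differentiableOn one_ne_zero).hasDerivAt_derivWithin_Ico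
      ⟨ht.1, ht.2.trans hb_a⟩)
    (hg'_mono.monotoneOn.mono (uIcc_of_le hb₀ ▸ hsub)).intervalIntegrable
    (hg_mono.monotoneOn.mono (Ico_subset_Ico_left hb₀))
    (((intervalIntegrable_iff_integrableOn_Ico_of_le (by linarith)).2 hg_int).mul_continuousOn
      continuous_sin.continuousOn)
    (fun t ht ↦ sin_nonpos_of_two_mul_nat_mul_pi_add_pi_le n (by linarith [ht.1])
      (by linarith [ht.2]))
  have hcos_a : 0 ≤ cos a := by
    rw [ha, cos_two_mul_nat_mul_pi_add_three_pi_div_two_add]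
    exact sin_nonneg_of_nonneg_of_le_pi hθ₀ (by linarith)
  have hgb : 0 ≤ g b :=
    hg0 ▸ hg_mono.monotoneOn (hsub ⟨le_rfl, hb₀⟩) (hsub ⟨hb₀, le_rfl⟩) hb₀
  rw [hg0] at hg_sin
  nlinarith [mul_nonneg hgb hcos_a]

theorem sin_integral_neg_of_increasing
    (a θ : ℝ) (n : ℕ)
    (g : ℝ → ℝ)
    (hg_pos : ∀ t ∈ Ioo (0 : ℝ) a, 0 < g t)
    (hg_C1 : ContDiffOn ℝ 1 g (Ico 0 a))
    (hg_int : IntegrableOn g (Ico 0 a))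
    (hg_mono : StrictMonoOn g (Ico 0 a))
    (hg'_mono : StrictMonoOn (derivWithin g (Ico 0 a)) (Ico 0 a))
    (hθ₀ : 0 ≤ θ) (hθ₁ : θ ≤ π / 2)
    (hg0 : g 0 = 0)
    (ha : a = 2 * n * π + 3 * π / 2 + θ) :
    (∫ t in (0 : ℝ)..a, g t * Real.sin t) < 0 :=
  sin_integral_neg_of_increasing_general a θ n g hg_C1 hg_int hg_mono hg'_mono hθ₀ hθ₁ hg0 ha
end

section
/- Let g be a C¹ function on [0, 2π] with g' strictly increasing. Then ∫₀^{2π} g(t) cos t dt > 0. -/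
open Real Set intervalIntegral MeasureTheory

/-! Integrating by parts, `∫₀^{2π} g cos = -∫₀^{2π} g' sin`. Folding `[π, 2π]` onto `[0, π]`
with `sin (t + π) = -sin t` turns this into `∫₀^π (g' (t + π) - g' t) sin t`, whose integrand is
positive on `(0, π)` because `g'` is strictly increasing. Monotonicity of `g'` also gives its
integrability. -/

theorem integral_mul_cos_zero_two_pi {g g' : ℝ → ℝ}
    (hg : ∀ x ∈ Icc 0 (2 * π), HasDerivWithinAt g (g' x) (Icc 0 (2 * π)) x)
    (hg' : IntervalIntegrable g' volume 0 (2 * π)) :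
    ∫ t in (0 : ℝ)..2 * π, g t * cos t = -∫ t in (0 : ℝ)..2 * π, g' t * sin t := by
  rw [← uIcc_of_le two_pi_pos.le] at hg
  rw [integral_mul_deriv_eq_deriv_mul_of_hasDerivWithinAt hg
    (fun x _ ↦ (hasDerivAt_sin x).hasDerivWithinAt) hg' (continuous_cos.intervalIntegrable _ _)]
  simp

theorem IntervalIntegrable.zero_pi_and_pi_two_pi {f : ℝ → ℝ}
    (hf : IntervalIntegrable f volume 0 (2 * π)) :
    IntervalIntegrable f volume 0 π ∧ IntervalIntegrable f volume π (2 * π) := by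
  have hπ : π ∈ uIcc 0 (2 * π) := by
    rw [uIcc_of_le two_pi_pos.le]
    constructor <;> linarith [pi_pos]
  exact ⟨hf.mono_set (uIcc_subset_uIcc left_mem_uIcc hπ),
    hf.mono_set (uIcc_subset_uIcc hπ right_mem_uIcc)⟩

theorem IntervalIntegrable.comp_add_pi {f : ℝ → ℝ} (hf : IntervalIntegrable f volume π (2 * π)) :
    IntervalIntegrable (fun t ↦ f (t + π)) volume 0 π := by
  simpa [two_mul] using hf.comp_add_right π

theorem integral_mul_sin_zero_two_pi {f : ℝ → ℝ} (hf : IntervalIntegrable f volume 0 (2 * π)) :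
    ∫ t in (0 : ℝ)..2 * π, f t * sin t = -∫ t in (0 : ℝ)..π, (f (t + π) - f t) * sin t := by
  obtain ⟨h₁, h₂⟩ := hf.zero_pi_and_pi_two_pi
  have hsin {s : Set ℝ} : ContinuousOn sin s := continuous_sin.continuousOn
  calc ∫ t in (0 : ℝ)..2 * π, f t * sin t
      = (∫ t in (0 : ℝ)..π, f t * sin t) + ∫ t in π..2 * π, f t * sin t :=
        (integral_add_adjacent_intervals (h₁.mul_continuousOn hsin)
          (h₂.mul_continuousOn hsin)).symm
    _ = (∫ t in (0 : ℝ)..π, f t * sin t) + ∫ t in (0 : ℝ)..π, f (t + π) * sin (t + π) := by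
        rw [integral_comp_add_right (fun t ↦ f t * sin t), zero_add, two_mul]
    _ = (∫ t in (0 : ℝ)..π, f t * sin t) - ∫ t in (0 : ℝ)..π, f (t + π) * sin t := by
        simp only [sin_add_pi, mul_neg, intervalIntegral.integral_neg, sub_eq_add_neg]
    _ = -∫ t in (0 : ℝ)..π, (f (t + π) - f t) * sin t := by
        rw [← intervalIntegral.integral_sub (h₁.mul_continuousOn hsin)
          (h₂.comp_add_pi.mul_continuousOn hsin), ← intervalIntegral.integral_neg]
        simp only [neg_sub, sub_mul]

theorem integral_sub_comp_add_pi_mul_sin_pos {f : ℝ → ℝ} (hf : StrictMonoOn f (Icc 0 (2 * π))) :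
    0 < ∫ t in (0 : ℝ)..π, (f (t + π) - f t) * sin t := by
  obtain ⟨h₁, h₂⟩ := (hf.monotoneOn.mono (uIcc_of_le two_pi_pos.le).subset).intervalIntegrable
    |>.zero_pi_and_pi_two_pi
  have hlt (t : ℝ) (ht : t ∈ Ioo 0 π) : f t < f (t + π) := by
    obtain ⟨h0, hπ⟩ := ht
    exact hf ⟨h0.le, by linarith⟩ ⟨by linarith, by linarith⟩ (by linarith)
  exact intervalIntegral_pos_of_pos_on
    ((h₂.comp_add_pi.sub h₁).mul_continuousOn continuous_sin.continuousOn)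
    (fun t ht ↦ mul_pos (sub_pos.2 (hlt t ht)) (sin_pos_of_pos_of_lt_pi ht.1 ht.2)) pi_pos

theorem integral_cos_pos_of_deriv_strict_mono
    (g : ℝ → ℝ)
    (hg_C1 : ContDiffOn ℝ 1 g (Icc 0 (2 * π)))
    (hg'_mono : StrictMonoOn (derivWithin g (Icc 0 (2 * π))) (Icc 0 (2 * π))) :
    0 < ∫ t in (0 : ℝ)..(2 * π), g t * Real.cos t := by
  have hderiv (x) (hx : x ∈ Icc 0 (2 * π)) :
      HasDerivWithinAt g (derivWithin g (Icc 0 (2 * π)) x) (Icc 0 (2 * π)) x :=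
    (hg_C1.differentiableOn one_ne_zero x hx).hasDerivWithinAt
  have hint : IntervalIntegrable (derivWithin g (Icc 0 (2 * π))) volume 0 (2 * π) :=
    (hg'_mono.monotoneOn.mono (uIcc_of_le two_pi_pos.le).subset).intervalIntegrable
  rw [integral_mul_cos_zero_two_pi hderiv hint, integral_mul_sin_zero_two_pi hint, neg_neg]
  exact integral_sub_comp_add_pi_mul_sin_pos hg'_mono
end

section
/- Let g be a nonnegative continuous integrable strictly increasing function on [0,a) where a = π/2 + kπ for a nonnegative even integer k. Then ∫₀ᵃ g(t) cos t dt > 0. -/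
/-!
On `[0, π/2]` the integrand is positive, since `g t > g 0 ≥ 0` and `cos t > 0` for `0 < t < π/2`.
The rest `[π/2, a]` consists of `k/2` full periods starting at `π/2`. On such a period the second
half is the first one shifted by `π`, where `cos` changes sign, so the period contributes
`∫ (g (t + π) - g t) * (-cos t)` over its first half, on which `cos ≤ 0` and `g` increases.
-/

open Real Set MeasureTheory

section Antiperiodic

variable {g h : ℝ → ℝ} {c p : ℝ}

theorem integral_mul_nonneg_of_antiperiodic (hp : 0 ≤ p) (hh : Function.Antiperiodic h p)
    (hh_nonpos : ∀ t ∈ Ioo c (c + p), h t ≤ 0) (hg : MonotoneOn g (Ico c (c + 2 * p)))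
    (hgh : IntervalIntegrable (fun t => g t * h t) volume c (c + 2 * p)) :
    0 ≤ ∫ t in c..c + 2 * p, g t * h t := by
  have hmid : c + p ∈ uIcc c (c + 2 * p) := mem_uIcc_of_le (by linarith) (by linarith)
  have hfirst := hgh.mono_set (uIcc_subset_uIcc left_mem_uIcc hmid)
  have hsecond := hgh.mono_set (uIcc_subset_uIcc hmid right_mem_uIcc)
  have hshifted : IntervalIntegrable (fun t => g (t + p) * h (t + p)) volume c (c + p) := by
    have := hsecond.comp_add_right p
    rwa [add_sub_cancel_right, show c + 2 * p - p = c + p by ring] at this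
  have hshift : ∫ t in c..c + p, g (t + p) * h (t + p) = ∫ t in c + p..c + 2 * p, g t * h t := by
    rw [intervalIntegral.integral_comp_add_right (fun t => g t * h t)]
    ring_nf
  have hsplit : ∫ t in c..c + 2 * p, g t * h t
      = ∫ t in c..c + p, (g (t + p) - g t) * (-h t) := by
    rw [← intervalIntegral.integral_add_adjacent_intervals hfirst hsecond, ← hshift,
      ← intervalIntegral.integral_add hfirst hshifted]
    congr 1 with t
    rw [hh t]
    ring
  rw [hsplit, intervalIntegral.integral_of_le (by linarith), integral_Ioc_eq_integral_Ioo]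
  refine setIntegral_nonneg measurableSet_Ioo fun t ht => mul_nonneg (sub_nonneg.2 ?_) ?_
  · exact hg ⟨ht.1.le, by linarith [ht.2]⟩ ⟨by linarith [ht.1], by linarith [ht.2]⟩ (by linarith)
  · exact neg_nonneg.2 (hh_nonpos t ht)

theorem integral_mul_nonneg_of_antiperiodic_of_nat_mul (n : ℕ) (hp : 0 ≤ p)
    (hh : Function.Antiperiodic h p) (hh_nonpos : ∀ t ∈ Ioo c (c + p), h t ≤ 0)
    (hg : MonotoneOn g (Ico c (c + n * (2 * p))))
    (hgh : IntervalIntegrable (fun t => g t * h t) volume c (c + n * (2 * p))) :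
    0 ≤ ∫ t in c..c + n * (2 * p), g t * h t := by
  have hperiodic : Function.Periodic h (2 * p) := by simpa [two_smul, two_mul] using hh.periodic
  induction n with
  | zero => simp
  | succ n ih =>
    set c' := c + n * (2 * p)
    have hcc' : c ≤ c' := le_add_of_nonneg_right (by positivity)
    have hend : c + (n + 1 : ℕ) * (2 * p) = c' + 2 * p := by push_cast; ring
    rw [hend] at hg hgh ⊢
    have hc' : c' ∈ uIcc c (c' + 2 * p) := mem_uIcc_of_le hcc' (by linarith)
    rw [← intervalIntegral.integral_add_adjacent_intervals
      (hgh.mono_set (uIcc_subset_uIcc left_mem_uIcc hc'))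
      (hgh.mono_set (uIcc_subset_uIcc hc' right_mem_uIcc))]
    refine add_nonneg (ih (hg.mono (Ico_subset_Ico_right (by linarith)))
      (hgh.mono_set (uIcc_subset_uIcc left_mem_uIcc hc')))
      (integral_mul_nonneg_of_antiperiodic hp hh (fun t ht => ?_)
        (hg.mono (Ico_subset_Ico_left hcc')) (hgh.mono_set (uIcc_subset_uIcc hc' right_mem_uIcc)))
    rw [← hperiodic.sub_nat_mul_eq n]
    exact hh_nonpos _ ⟨by linarith [ht.1], by linarith [ht.2]⟩

end Antiperiodic

theorem integral_mul_cos_pos_of_strictMonoOn {g : ℝ → ℝ} (hg_nonneg : 0 ≤ g 0)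
    (hg_mono : StrictMonoOn g (Ico 0 (π / 2)))
    (hint : IntervalIntegrable (fun t => g t * cos t) volume 0 (π / 2)) :
    0 < ∫ t in (0 : ℝ)..π / 2, g t * cos t := by
  refine intervalIntegral.intervalIntegral_pos_of_pos_on hint (fun t ht => mul_pos ?_
    (cos_pos_of_mem_Ioo ⟨by linarith [ht.1, pi_pos], ht.2⟩)) pi_div_two_pos
  have h0 : (0 : ℝ) ∈ Ico 0 (π / 2) := ⟨le_rfl, pi_div_two_pos⟩
  exact hg_nonneg.trans_lt (hg_mono h0 ⟨ht.1.le, ht.2⟩ ht.1)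

theorem integral_cos_pos_of_strict_mono_even_general
    (a : ℝ) (k : ℕ) (hk : Even k)
    (g : ℝ → ℝ)
    (hg_nonneg : ∀ t ∈ Ico (0 : ℝ) a, 0 ≤ g t)
    (hg_int : IntegrableOn g (Ico 0 a))
    (hg_mono : StrictMonoOn g (Ico 0 a))
    (ha : a = π / 2 + k * π) :
    0 < ∫ t in (0 : ℝ)..a, g t * Real.cos t := by
  obtain ⟨m, rfl⟩ := hk
  have ha' : a = π / 2 + m * (2 * π) := by rw [ha]; push_cast; ring
  have hpa : π / 2 ≤ a := by
    rw [ha']; exact le_add_of_nonneg_right (by positivity)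
  have hint : IntervalIntegrable (fun t => g t * cos t) volume 0 a :=
    ((intervalIntegrable_iff_integrableOn_Ioo_of_le (by linarith [pi_pos])).2
      (hg_int.mono_set Ioo_subset_Ico_self)).mul_continuousOn continuous_cos.continuousOn
  have hmid : π / 2 ∈ uIcc 0 a := mem_uIcc_of_le (by linarith [pi_pos]) hpa
  have hint_head := hint.mono_set (uIcc_subset_uIcc left_mem_uIcc hmid)
  have hint_tail := hint.mono_set (uIcc_subset_uIcc hmid right_mem_uIcc)
  have hhead : 0 < ∫ t in (0 : ℝ)..π / 2, g t * cos t :=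
    integral_mul_cos_pos_of_strictMonoOn (hg_nonneg 0 ⟨le_rfl, by linarith [pi_pos]⟩)
      (hg_mono.mono (Ico_subset_Ico_right hpa)) hint_head
  have htail : 0 ≤ ∫ t in π / 2..a, g t * cos t := by
    have hg_tail := hg_mono.monotoneOn.mono (Ico_subset_Ico_left pi_div_two_pos.le : Ico (π / 2) a ⊆ _)
    rw [ha'] at hint_tail hg_tail ⊢
    exact integral_mul_nonneg_of_antiperiodic_of_nat_mul m pi_pos.le cos_antiperiodic
      (fun t ht => cos_nonpos_of_pi_div_two_le_of_le ht.1.le (by linarith [ht.2])) hg_tail hint_tail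
  rw [← intervalIntegral.integral_add_adjacent_intervals hint_head hint_tail]
  linarith

theorem integral_cos_pos_of_strict_mono_even
    (a : ℝ) (k : ℕ) (hk : Even k)
    (g : ℝ → ℝ)
    (hg_nonneg : ∀ t ∈ Ico (0 : ℝ) a, 0 ≤ g t)
    (hg_cont : ContinuousOn g (Ico 0 a))
    (hg_int : IntegrableOn g (Ico 0 a))
    (hg_mono : StrictMonoOn g (Ico 0 a))
    (ha : a = π / 2 + k * π) :
    0 < ∫ t in (0 : ℝ)..a, g t * Real.cos t :=
  integral_cos_pos_of_strict_mono_even_general a k hk g hg_nonneg hg_int hg_mono ha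
end

section
/- Let φ : ℝ → ℝ be a positive even C² function that is increasing on [0,1]. Then the entire function G(z) = ∫_{-1}^{1} φ(t) e^{-itz} dt has only real zeros. -/
/-!
Put `w = -i z` and `F(w) = ∫₀¹ φ(t) e^{tw} dt`. Since `φ` is even, `G(z) = F(w) + F(-w)`,
which is symmetric in `w ↦ -w`, so it suffices to show `F(w) + F(-w) ≠ 0` for `Re w > 0`.
This follows from `F(w) ≠ 0` together with `‖F(-w)‖ ≤ e^{-Re w} ‖F(w)‖`.

The inequality is the limit of its discrete analogue for the Riemann sums `∑ₖ bₖ ξᵏ`, where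
`ξ = e^{-w/n}` and `bₖ = ∫_{k/n}^{(k+1)/n} φ`, which increase with `k`. By the
Eneström–Kakeya theorem every root `a` of `∑ₖ bₖ Xᵏ` lies in the closed unit disc, and there
the Blaschke-type inequality `‖ξ - a‖ ≤ ‖ξ‖ ‖ξ̄⁻¹ - a‖` holds factor by factor.

`F(w) ≠ 0` is the continuous Eneström–Kakeya theorem: integrating by parts,
`w F(w) = φ(1) e^w - φ(0) - ∫₀¹ φ'(t) e^{tw} dt`, and as `φ' ≥ 0` the last integral has norm at most
`e^{Re w} (φ(1) - φ(0)) < ‖φ(1) e^w - φ(0)‖`.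
-/

open Real Set Finset Filter Topology Polynomial ComplexConjugate

theorem sub_one_mul_sum_range_succ_mul_pow {R : Type*} [CommRing R] (b : ℕ → R) (a : R) (m : ℕ) :
    (a - 1) * ∑ k ∈ range (m + 1), b k * a ^ k
      = b m * a ^ (m + 1) - b 0 - ∑ k ∈ range m, (b (k + 1) - b k) * a ^ (k + 1) := by
  induction m with
  | zero => simp; ring
  | succ m ih =>
    rw [sum_range_succ, mul_add, ih, sum_range_succ]
    ring

theorem norm_le_one_of_sum_mul_pow_eq_zero {b : ℕ → ℝ} {m : ℕ} (hb₀ : 0 < b 0)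
    (hb : ∀ k < m, b k ≤ b (k + 1)) {a : ℂ} (ha : ∑ k ∈ range (m + 1), (b k : ℂ) * a ^ k = 0) :
    ‖a‖ ≤ 1 := by
  by_contra! h
  have hdiff : ∀ k ∈ range m, 0 ≤ b (k + 1) - b k := fun k hk =>
    sub_nonneg.2 (hb k (mem_range.1 hk))
  have htel : b m = b 0 + ∑ k ∈ range m, (b (k + 1) - b k) := by
    rw [sum_range_sub]; ring
  have hbm : 0 < b m := by rw [htel]; linarith [sum_nonneg hdiff]
  have hlead : (b m : ℂ) * a ^ (m + 1)
      = b 0 + ∑ k ∈ range m, ((b (k + 1) : ℂ) - b k) * a ^ (k + 1) := by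
    linear_combination (a - 1) * ha - sub_one_mul_sum_range_succ_mul_pow (fun k => (b k : ℂ)) a m
  have : b m * ‖a‖ ^ (m + 1) ≤ b m * ‖a‖ ^ m :=
    calc b m * ‖a‖ ^ (m + 1) = ‖(b m : ℂ) * a ^ (m + 1)‖ := by
          rw [norm_mul, norm_pow, Complex.norm_real, Real.norm_of_nonneg hbm.le]
      _ ≤ b 0 + ∑ k ∈ range m, (b (k + 1) - b k) * ‖a‖ ^ (k + 1) := by
          rw [hlead]
          refine (norm_add_le _ _).trans (add_le_add (by simp [abs_of_pos hb₀])
            ((norm_sum_le _ _).trans (sum_le_sum fun k hk => ?_)))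
          rw [norm_mul, norm_pow, ← Complex.ofReal_sub, Complex.norm_real,
            Real.norm_of_nonneg (hdiff k hk)]
      _ ≤ b 0 * ‖a‖ ^ m + ∑ k ∈ range m, (b (k + 1) - b k) * ‖a‖ ^ m := by
          refine add_le_add (le_mul_of_one_le_right hb₀.le (one_le_pow₀ h.le))
            (sum_le_sum fun k hk => mul_le_mul_of_nonneg_left ?_ (hdiff k hk))
          exact pow_le_pow_right₀ h.le (mem_range.1 hk)
      _ = b m * ‖a‖ ^ m := by rw [← sum_mul, htel]; ring
  rw [pow_succ] at this
  nlinarith [mul_pos hbm (pow_pos (one_pos.trans h) m)]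

theorem norm_sub_le_norm_mul_norm_inv_conj_sub {a ξ : ℂ} (ha : ‖a‖ ≤ 1) (hξ : ‖ξ‖ ≤ 1)
    (hξ₀ : ξ ≠ 0) : ‖ξ - a‖ ≤ ‖ξ‖ * ‖(conj ξ)⁻¹ - a‖ := by
  have hconj : ‖ξ‖ * ‖(conj ξ)⁻¹ - a‖ = ‖1 - a * conj ξ‖ := by
    rw [← Complex.norm_conj ξ, ← norm_mul, mul_sub, mul_inv_cancel₀ ((_root_.map_ne_zero _).2 hξ₀),
      mul_comm]
  have key : Complex.normSq (1 - a * conj ξ)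
      = Complex.normSq (ξ - a) + (1 - Complex.normSq ξ) * (1 - Complex.normSq a) := by
    simp only [Complex.normSq_apply, Complex.sub_re, Complex.sub_im, Complex.mul_re,
      Complex.mul_im, Complex.one_re, Complex.one_im, Complex.conj_re, Complex.conj_im]
    ring
  rw [hconj, ← sq_le_sq₀ (norm_nonneg _) (norm_nonneg _), ← Complex.normSq_eq_norm_sq,
    ← Complex.normSq_eq_norm_sq, key]
  have h1 : Complex.normSq ξ ≤ 1 := by rw [Complex.normSq_eq_norm_sq]; nlinarith [norm_nonneg ξ]
  have h2 : Complex.normSq a ≤ 1 := by rw [Complex.normSq_eq_norm_sq]; nlinarith [norm_nonneg a]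
  nlinarith

theorem Polynomial.norm_eval_le_of_roots_norm_le_one {p : ℂ[X]} (hp : ∀ a ∈ p.roots, ‖a‖ ≤ 1)
    {ξ : ℂ} (hξ : ‖ξ‖ ≤ 1) (hξ₀ : ξ ≠ 0) :
    ‖p.eval ξ‖ ≤ ‖ξ‖ ^ p.natDegree * ‖p.eval (conj ξ)⁻¹‖ := by
  have hsplit : p.Splits := IsAlgClosed.splits p
  have hnorm (s : Multiset ℂ) : ‖s.prod‖ = (s.map (‖·‖)).prod := map_multiset_prod normHom s
  rw [hsplit.eval_eq_prod_roots, hsplit.eval_eq_prod_roots, ← splits_iff_card_roots.1 hsplit,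
    norm_mul, norm_mul, hnorm, hnorm, Multiset.map_map, Multiset.map_map, mul_left_comm,
    ← Multiset.prod_replicate, ← Multiset.map_const', ← Multiset.prod_map_mul]
  exact mul_le_mul_of_nonneg_left (Multiset.prod_map_le_prod_map₀ _ _ (fun _ _ => norm_nonneg _)
    fun a ha => norm_sub_le_norm_mul_norm_inv_conj_sub (hp a ha) hξ hξ₀) (norm_nonneg _)

theorem norm_sum_mul_pow_le_mul_norm_sum_mul_inv_pow {b : ℕ → ℝ} {m : ℕ} (hb₀ : 0 < b 0)
    (hb : ∀ k < m, b k ≤ b (k + 1)) {ξ : ℂ} (hξ : ‖ξ‖ ≤ 1) (hξ₀ : ξ ≠ 0) :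
    ‖∑ k ∈ range (m + 1), (b k : ℂ) * ξ ^ k‖
      ≤ ‖ξ‖ ^ m * ‖∑ k ∈ range (m + 1), (b k : ℂ) * ξ⁻¹ ^ k‖ := by
  set p : ℂ[X] := ∑ k ∈ range (m + 1), C (b k : ℂ) * X ^ k
  have heval (x : ℂ) : p.eval x = ∑ k ∈ range (m + 1), (b k : ℂ) * x ^ k := by
    simp [p, eval_finsetSum]
  have hbm : 0 < b m := by
    refine hb₀.trans_le <| monotoneOn_of_le_succ (s := Iic m) ordConnected_Iic (fun k _ _ hk => ?_)
      (by simp) (by simp) (Nat.zero_le m)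
    rw [Order.succ_eq_add_one] at hk ⊢
    exact hb k (mem_Iic.1 hk)
  have hcoeff : p.coeff m ≠ 0 := by
    simpa [p, finsetSum_coeff, coeff_C_mul_X_pow] using hbm.ne'
  have hroots (a : ℂ) (ha : a ∈ p.roots) : ‖a‖ ≤ 1 :=
    norm_le_one_of_sum_mul_pow_eq_zero hb₀ hb (heval a ▸ (mem_roots'.1 ha).2)
  calc ‖∑ k ∈ range (m + 1), (b k : ℂ) * ξ ^ k‖ = ‖p.eval ξ‖ := by rw [heval]
    _ ≤ ‖ξ‖ ^ p.natDegree * ‖p.eval (conj ξ)⁻¹‖ :=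
      p.norm_eval_le_of_roots_norm_le_one hroots hξ hξ₀
    _ ≤ ‖ξ‖ ^ m * ‖p.eval (conj ξ)⁻¹‖ :=
      mul_le_mul_of_nonneg_right (pow_le_pow_of_le_one (norm_nonneg _) hξ
        (le_natDegree_of_ne_zero hcoeff)) (norm_nonneg _)
    _ = ‖ξ‖ ^ m * ‖∑ k ∈ range (m + 1), (b k : ℂ) * ξ⁻¹ ^ k‖ := by
      rw [heval, ← map_inv₀]
      congr 1
      rw [← Complex.norm_conj, map_sum]
      simp

-- The right endpoint is the cast of `k + 1`, so that consecutive subintervals share an endpoint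
-- syntactically.
noncomputable def riemannWeight (φ : ℝ → ℝ) (n k : ℕ) : ℝ :=
  ∫ t in (k / n : ℝ)..((k + 1 : ℕ) / n : ℝ), φ t

noncomputable def weightedRiemannSum (φ : ℝ → ℝ) (f : ℝ → ℂ) (n : ℕ) : ℂ :=
  ∑ k ∈ range n, (riemannWeight φ n k : ℂ) * f (k / n)

theorem sum_integral_uniform_partition {E : Type*} [NormedAddCommGroup E] [NormedSpace ℝ E]
    {g : ℝ → E} (hg : Continuous g) {n : ℕ} (hn : n ≠ 0) :
    ∑ k ∈ range n, ∫ t in (k / n : ℝ)..((k + 1 : ℕ) / n : ℝ), g t = ∫ t in (0 : ℝ)..1, g t := by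
  rw [intervalIntegral.sum_integral_adjacent_intervals (a := fun k : ℕ => (k / n : ℝ))
    fun _ _ => hg.intervalIntegrable _ _]
  simp [hn]

theorem weightedRiemannSum_sub_integral {φ : ℝ → ℝ} {f : ℝ → ℂ} (hφ : Continuous φ)
    (hf : Continuous f) {n : ℕ} (hn : n ≠ 0) :
    weightedRiemannSum φ f n - ∫ t in (0 : ℝ)..1, (φ t : ℂ) * f t
      = ∑ k ∈ range n,
          ∫ t in (k / n : ℝ)..((k + 1 : ℕ) / n : ℝ), (φ t : ℂ) * (f (k / n) - f t) := by
  have hcont : Continuous fun t => (φ t : ℂ) * f t := (Complex.continuous_ofReal.comp hφ).mul hf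
  rw [weightedRiemannSum, ← sum_integral_uniform_partition hcont hn, ← sum_sub_distrib]
  refine sum_congr rfl fun k _ => ?_
  have hconst : Continuous fun t => (φ t : ℂ) * f (k / n) :=
    (Complex.continuous_ofReal.comp hφ).mul continuous_const
  simp only [mul_sub]
  rw [intervalIntegral.integral_sub (hconst.intervalIntegrable _ _) (hcont.intervalIntegrable _ _),
    intervalIntegral.integral_mul_const, riemannWeight, intervalIntegral.integral_ofReal]

theorem norm_weightedRiemannSum_sub_integral_le {φ : ℝ → ℝ} {f : ℝ → ℂ} (hφ : Continuous φ)
    (hf : Continuous f) {n : ℕ} (hn : n ≠ 0) {ε : ℝ}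
    (hε : ∀ s ∈ Icc (0 : ℝ) 1, ∀ t ∈ Icc (0 : ℝ) 1, dist s t ≤ 1 / n → ‖f s - f t‖ ≤ ε) :
    ‖weightedRiemannSum φ f n - ∫ t in (0 : ℝ)..1, (φ t : ℂ) * f t‖
      ≤ ε * ∫ t in (0 : ℝ)..1, |φ t| := by
  have hn' : (0 : ℝ) < n := Nat.cast_pos.2 (Nat.pos_of_ne_zero hn)
  rw [weightedRiemannSum_sub_integral hφ hf hn, ← intervalIntegral.integral_const_mul,
    ← sum_integral_uniform_partition (g := fun t => ε * |φ t|) (continuous_const.mul hφ.abs) hn]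
  refine (norm_sum_le _ _).trans (sum_le_sum fun k hk => ?_)
  have hkn : k + 1 ≤ n := mem_range.1 hk
  have hle : (k / n : ℝ) ≤ ((k + 1 : ℕ) / n : ℝ) := by gcongr; exact_mod_cast k.le_succ
  refine intervalIntegral.norm_integral_le_of_norm_le hle (Eventually.of_forall fun t ht => ?_)
    ((continuous_const.mul hφ.abs).intervalIntegrable _ _)
  have hk0 : (0 : ℝ) ≤ k / n := by positivity
  have hk1 : ((k + 1 : ℕ) / n : ℝ) ≤ 1 := (div_le_one hn').2 (by exact_mod_cast hkn)
  rw [norm_mul, Complex.norm_real, Real.norm_eq_abs, mul_comm]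
  refine mul_le_mul_of_nonneg_right (hε _ ⟨hk0, hle.trans hk1⟩ _
    ⟨hk0.trans ht.1.le, ht.2.trans hk1⟩ ?_) (abs_nonneg _)
  rw [Real.dist_eq, abs_sub_comm, abs_of_nonneg (by linarith [ht.1])]
  have : ((k + 1 : ℕ) / n : ℝ) = k / n + 1 / n := by push_cast; ring
  linarith [ht.2]

theorem tendsto_weightedRiemannSum {φ : ℝ → ℝ} {f : ℝ → ℂ} (hφ : Continuous φ)
    (hf : Continuous f) :
    Tendsto (weightedRiemannSum φ f) atTop (𝓝 (∫ t in (0 : ℝ)..1, (φ t : ℂ) * f t)) := by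
  set C := ∫ t in (0 : ℝ)..1, |φ t|
  have hC : 0 ≤ C := intervalIntegral.integral_nonneg zero_le_one fun t _ => abs_nonneg _
  rw [Metric.tendsto_atTop]
  intro ε hε
  obtain ⟨δ, hδ, hfδ⟩ := Metric.uniformContinuousOn_iff_le.1
    ((isCompact_Icc (a := (0 : ℝ)) (b := 1)).uniformContinuousOn_of_continuous hf.continuousOn)
    (ε / (C + 1)) (by positivity)
  obtain ⟨N, hN⟩ := exists_nat_one_div_lt hδ
  refine ⟨N + 1, fun n hn => ?_⟩
  have hn' : n ≠ 0 := by omega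
  rw [dist_eq_norm]
  refine (norm_weightedRiemannSum_sub_integral_le (ε := ε / (C + 1)) hφ hf hn'
    fun s hs t ht hst => ?_).trans_lt ?_
  · rw [← dist_eq_norm]
    refine hfδ s hs t ht (hst.trans (hN.le.trans' ?_))
    gcongr
    exact_mod_cast hn
  · rw [div_mul_eq_mul_div, div_lt_iff₀ (by positivity)]
    nlinarith

theorem riemannWeight_zero_pos {φ : ℝ → ℝ} (hφ : Continuous φ) (h₀ : 0 < φ 0)
    (hm : MonotoneOn φ (Icc 0 1)) {n : ℕ} (hn : n ≠ 0) : 0 < riemannWeight φ n 0 := by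
  have hn' : (0 : ℝ) < n := Nat.cast_pos.2 (Nat.pos_of_ne_zero hn)
  have hn1 : (1 / n : ℝ) ≤ 1 := (div_le_one hn').2 (Nat.one_le_cast.2 (Nat.pos_of_ne_zero hn))
  refine intervalIntegral.intervalIntegral_pos_of_pos_on (hφ.intervalIntegrable _ _)
    (fun t ht => ?_) (by simp [hn'])
  simp only [CharP.cast_eq_zero, zero_div, zero_add, Nat.cast_one] at ht
  exact h₀.trans_le (hm (left_mem_Icc.2 zero_le_one) ⟨ht.1.le, ht.2.le.trans hn1⟩ ht.1.le)

theorem riemannWeight_le_succ {φ : ℝ → ℝ} (hφ : Continuous φ) (hm : MonotoneOn φ (Icc 0 1))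
    {n k : ℕ} (hk : k + 2 ≤ n) : riemannWeight φ n k ≤ riemannWeight φ n (k + 1) := by
  have hn : (0 : ℝ) < n := by exact_mod_cast (by omega : 0 < n)
  have hshift : riemannWeight φ n (k + 1)
      = ∫ t in (k / n : ℝ)..((k + 1 : ℕ) / n : ℝ), φ (t + 1 / n) := by
    rw [intervalIntegral.integral_comp_add_right, riemannWeight]
    congr 1 <;> push_cast <;> ring
  have h₀ : (0 : ℝ) ≤ k / n := by positivity
  have h₁ : ((k + 1 : ℕ) / n : ℝ) + 1 / n ≤ 1 := by
    rw [← add_div, div_le_one hn]; exact_mod_cast hk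
  have h₂ : (0 : ℝ) < 1 / n := by positivity
  rw [hshift, riemannWeight]
  refine intervalIntegral.integral_mono_on (by gcongr; exact_mod_cast k.le_succ)
    (hφ.intervalIntegrable _ _) ((hφ.comp (continuous_add_const _)).intervalIntegrable _ _)
    fun t ht => hm ⟨?_, ?_⟩ ⟨?_, ?_⟩ (by simp [hn.le])
  all_goals linarith [ht.1, ht.2]

theorem weightedRiemannSum_exp (φ : ℝ → ℝ) (w : ℂ) (n : ℕ) :
    weightedRiemannSum φ (fun t => Complex.exp (t * w)) n
      = ∑ k ∈ range n, (riemannWeight φ n k : ℂ) * Complex.exp (w / n) ^ k := by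
  refine sum_congr rfl fun k _ => ?_
  rw [← Complex.exp_nat_mul]
  push_cast
  ring_nf

noncomputable def expTransform (φ : ℝ → ℝ) (w : ℂ) : ℂ :=
  ∫ t in (0 : ℝ)..1, (φ t : ℂ) * Complex.exp (t * w)

theorem deriv_nonneg_of_monotoneOn_Icc {φ : ℝ → ℝ} {a b : ℝ} (hab : a < b)
    (hφ : Differentiable ℝ φ) (hm : MonotoneOn φ (Icc a b)) {t : ℝ} (ht : t ∈ Icc a b) :
    0 ≤ deriv φ t := by
  rw [← (hφ t).derivWithin (uniqueDiffOn_Icc hab t ht)]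
  exact hm.derivWithin_nonneg

theorem mul_expTransform {φ : ℝ → ℝ} (hφ : ContDiff ℝ 1 φ) (w : ℂ) :
    w * expTransform φ w
      = φ 1 * Complex.exp w - φ 0
          - ∫ t in (0 : ℝ)..1, ((deriv φ t : ℝ) : ℂ) * Complex.exp (t * w) := by
  have hexp (t : ℝ) :
      HasDerivAt (fun t : ℝ => Complex.exp (t * w)) (Complex.exp (t * w) * w) t := by
    simpa using ((hasDerivAt_id (t : ℂ)).mul_const w).cexp.comp_ofReal
  have hibp := intervalIntegral.integral_mul_deriv_eq_deriv_mul
    (u := fun t => (φ t : ℂ)) (a := 0) (b := 1)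
    (fun t _ => ((hφ.differentiable one_ne_zero t).hasDerivAt).ofReal_comp) (fun t _ => hexp t)
    ((Complex.continuous_ofReal.comp (hφ.continuous_deriv le_rfl)).intervalIntegrable _ _)
    (((Complex.continuous_ofReal.mul continuous_const).cexp.mul
      continuous_const).intervalIntegrable _ _)
  rw [expTransform, ← intervalIntegral.integral_const_mul]
  simpa [mul_comm, mul_left_comm] using hibp

theorem norm_integral_deriv_mul_exp_le {φ : ℝ → ℝ} (hφ : ContDiff ℝ 1 φ)
    (hm : MonotoneOn φ (Icc 0 1)) {w : ℂ} (hw : 0 ≤ w.re) :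
    ‖∫ t in (0 : ℝ)..1, ((deriv φ t : ℝ) : ℂ) * Complex.exp (t * w)‖
      ≤ Real.exp w.re * (φ 1 - φ 0) := by
  have hd := hφ.continuous_deriv le_rfl
  calc ‖∫ t in (0 : ℝ)..1, ((deriv φ t : ℝ) : ℂ) * Complex.exp (t * w)‖
      ≤ ∫ t in (0 : ℝ)..1, Real.exp w.re * deriv φ t := by
        refine intervalIntegral.norm_integral_le_of_norm_le zero_le_one
          (Eventually.of_forall fun t ht => ?_) ((continuous_const.mul hd).intervalIntegrable _ _)
        have hφ' := deriv_nonneg_of_monotoneOn_Icc one_pos (hφ.differentiable one_ne_zero) hm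
          (Ioc_subset_Icc_self ht)
        rw [norm_mul, Complex.norm_real, Real.norm_of_nonneg hφ', Complex.norm_exp, mul_comm]
        refine mul_le_mul_of_nonneg_right (Real.exp_le_exp.2 ?_) hφ'
        simpa using mul_le_of_le_one_left hw ht.2
    _ = Real.exp w.re * (φ 1 - φ 0) := by
        rw [intervalIntegral.integral_const_mul, intervalIntegral.integral_deriv_eq_sub
          (fun t _ => hφ.differentiable one_ne_zero t) (hd.intervalIntegrable _ _)]

theorem expTransform_ne_zero {φ : ℝ → ℝ} (hφ : ContDiff ℝ 1 φ) (h₀ : 0 < φ 0)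
    (hm : MonotoneOn φ (Icc 0 1)) {w : ℂ} (hw : 0 < w.re) : expTransform φ w ≠ 0 := by
  intro hzero
  have h₁ : φ 0 ≤ φ 1 := hm (left_mem_Icc.2 zero_le_one) (right_mem_Icc.2 zero_le_one) zero_le_one
  have hexp : 1 < Real.exp w.re := Real.one_lt_exp_iff.2 hw
  have hibp := mul_expTransform hφ w
  rw [hzero, mul_zero, eq_comm, sub_eq_zero] at hibp
  have hle := norm_integral_deriv_mul_exp_le hφ hm hw.le
  rw [← hibp] at hle
  have hge : φ 1 * Real.exp w.re - φ 0 ≤ ‖(φ 1 : ℂ) * Complex.exp w - φ 0‖ := by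
    refine (norm_sub_norm_le _ _).trans' (le_of_eq ?_)
    rw [norm_mul, Complex.norm_real, Complex.norm_real, Real.norm_of_nonneg (h₀.trans_le h₁).le,
      Real.norm_of_nonneg h₀.le, Complex.norm_exp]
  nlinarith

theorem norm_weightedRiemannSum_exp_neg_le {φ : ℝ → ℝ} (hφ : Continuous φ) (h₀ : 0 < φ 0)
    (hm : MonotoneOn φ (Icc 0 1)) {w : ℂ} (hw : 0 ≤ w.re) (m : ℕ) :
    ‖weightedRiemannSum φ (fun t => Complex.exp (t * -w)) (m + 1)‖
      ≤ Real.exp (-w.re * (m / (m + 1)))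
        * ‖weightedRiemannSum φ (fun t => Complex.exp (t * w)) (m + 1)‖ := by
  set ξ := Complex.exp (-w / (m + 1 : ℕ))
  have hξ : ‖ξ‖ = Real.exp (-w.re / (m + 1)) := by
    simp only [ξ, Complex.norm_exp, Complex.div_natCast_re, Complex.neg_re]
    push_cast; ring_nf
  have hξ₁ : ‖ξ‖ ≤ 1 := by
    rw [hξ, Real.exp_le_one_iff]
    exact div_nonpos_of_nonpos_of_nonneg (neg_nonpos.2 hw) (by positivity)
  have hξinv : Complex.exp (w / (m + 1 : ℕ)) = ξ⁻¹ := by rw [← Complex.exp_neg, neg_div, neg_neg]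
  rw [weightedRiemannSum_exp, weightedRiemannSum_exp, hξinv]
  calc _ ≤ ‖ξ‖ ^ m * ‖∑ k ∈ range (m + 1), (riemannWeight φ (m + 1) k : ℂ) * ξ⁻¹ ^ k‖ :=
        norm_sum_mul_pow_le_mul_norm_sum_mul_inv_pow
          (riemannWeight_zero_pos hφ h₀ hm m.succ_ne_zero)
          (fun k hk => riemannWeight_le_succ hφ hm (by omega)) hξ₁ (Complex.exp_ne_zero _)
    _ = _ := by
        rw [hξ, ← Real.exp_nat_mul]
        congr 2
        ring

theorem norm_expTransform_neg_le {φ : ℝ → ℝ} (hφ : Continuous φ) (h₀ : 0 < φ 0)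
    (hm : MonotoneOn φ (Icc 0 1)) {w : ℂ} (hw : 0 ≤ w.re) :
    ‖expTransform φ (-w)‖ ≤ Real.exp (-w.re) * ‖expTransform φ w‖ := by
  have hlim (v : ℂ) : Tendsto
      (fun m : ℕ => weightedRiemannSum φ (fun t => Complex.exp (t * v)) (m + 1)) atTop
      (𝓝 (expTransform φ v)) :=
    (tendsto_weightedRiemannSum hφ (by fun_prop)).comp (tendsto_add_atTop_nat 1)
  have hexp : Tendsto (fun m : ℕ => Real.exp (-w.re * (m / (m + 1)))) atTop
      (𝓝 (Real.exp (-w.re))) := by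
    simpa using ((tendsto_natCast_div_add_atTop (1 : ℝ)).const_mul (-w.re)).rexp
  exact le_of_tendsto_of_tendsto' (hlim (-w)).norm (hexp.mul (hlim w).norm)
    (norm_weightedRiemannSum_exp_neg_le hφ h₀ hm hw)

theorem expTransform_add_expTransform_neg_ne_zero {φ : ℝ → ℝ} (hφ : ContDiff ℝ 1 φ)
    (h₀ : 0 < φ 0) (hm : MonotoneOn φ (Icc 0 1)) {w : ℂ} (hw : w.re ≠ 0) :
    expTransform φ w + expTransform φ (-w) ≠ 0 := by
  wlog hpos : 0 < w.re generalizing w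
  · simpa [add_comm] using this (w := -w) (by simpa using hw)
      (by simpa using lt_of_le_of_ne (not_lt.1 hpos) hw)
  intro hsum
  have hne := expTransform_ne_zero hφ h₀ hm hpos
  have hle := norm_expTransform_neg_le hφ.continuous h₀ hm hpos.le
  rw [eq_neg_of_add_eq_zero_right hsum, norm_neg] at hle
  have hlt : Real.exp (-w.re) < 1 := Real.exp_lt_one_iff.2 (neg_lt_zero.2 hpos)
  nlinarith [norm_pos_iff.2 hne]

theorem intervalIntegral_neg_one_one_eq_expTransform_add {φ : ℝ → ℝ} (hφ : Continuous φ)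
    (heven : ∀ t, φ (-t) = φ t) (w : ℂ) :
    ∫ t in (-1 : ℝ)..1, (φ t : ℂ) * Complex.exp (t * w)
      = expTransform φ w + expTransform φ (-w) := by
  have hint (a b : ℝ) : IntervalIntegrable (fun t => (φ t : ℂ) * Complex.exp (t * w))
      MeasureTheory.volume a b := by
    apply Continuous.intervalIntegrable; fun_prop
  rw [← intervalIntegral.integral_add_adjacent_intervals (hint _ 0) (hint 0 _), add_comm,
    expTransform, expTransform]
  congr 1
  rw [← neg_zero, ← intervalIntegral.integral_comp_neg, neg_zero]
  simp [heven]

theorem fourier_transform_real_zeros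
    (φ : ℝ → ℝ)
    (hφ_C2 : ContDiff ℝ 2 φ)
    (hφ_pos : ∀ t, 0 < φ t)
    (hφ_even : ∀ t, φ (-t) = φ t)
    (hφ_mono : MonotoneOn φ (Icc 0 1)) :
    ∀ z : ℂ,
      (∫ t in (-1 : ℝ)..1, (φ t : ℂ) * Complex.exp (-Complex.I * t * z)) = 0 →
        z.im = 0 := by
  intro z hz
  have hre : (-Complex.I * z).re = z.im := by simp
  by_contra hne
  rw [← hre] at hne
  refine expTransform_add_expTransform_neg_ne_zero (hφ_C2.of_le (by norm_num)) (hφ_pos 0)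
    hφ_mono hne ?_
  rw [← intervalIntegral_neg_one_one_eq_expTransform_add hφ_C2.continuous hφ_even, ← hz]
  congr 1 with t
  ring_nf
end

section
/- Let μ be a positive finite Borel measure on ℝⁿ with support exactly the closed ball of radius R₁ centered at the origin. Then for every ε > 0 there exists c_ε > 0 such that ∫_{|x| ≤ R₁} e^{x·y} dμ(x) ≥ c_ε · e^{(R₁ − ε)|y|} for all y ∈ ℝⁿ (with c_ε uniform in y when μ is rotation invariant). -/
/-!
If `u` is a unit vector with `⟪u, y⟫ = ‖y‖`, then `⟪x, y⟫ ≥ (R₁ - ε) ‖y‖` on the ball of radius `ε`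
around the boundary point `R₁ u`, so the integral is at least `e^{(R₁ - ε)‖y‖}` times the mass of
that ball. This mass is positive because the ball is centred in the support, and it does not depend
on `u` because a reflection of the space carries any boundary point to any other one.
-/

open MeasureTheory Metric
open scoped RealInnerProductSpace

variable {E : Type*} [NormedAddCommGroup E] [InnerProductSpace ℝ E]

theorem exists_norm_eq_one_inner_eq_norm [Nontrivial E] (y : E) :
    ∃ u : E, ‖u‖ = 1 ∧ ⟪u, y⟫ = ‖y‖ := by
  rcases eq_or_ne y 0 with rfl | hy
  · obtain ⟨u, hu⟩ := exists_norm_eq E zero_le_one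
    exact ⟨u, hu, by simp⟩
  · refine ⟨‖y‖⁻¹ • y, by simp [norm_smul, hy], ?_⟩
    rw [real_inner_smul_left, real_inner_self_eq_norm_sq]
    field_simp

theorem sub_mul_norm_le_inner_of_mem_ball {u x y : E} {R ε : ℝ} (huy : ⟪u, y⟫ = ‖y‖)
    (hx : x ∈ ball (R • u) ε) : (R - ε) * ‖y‖ ≤ ⟪x, y⟫ := by
  have hsplit : ⟪x, y⟫ = R * ‖y‖ + ⟪x - R • u, y⟫ := by
    rw [inner_sub_left, real_inner_smul_left, huy]
    ring
  have hdev : -(ε * ‖y‖) ≤ ⟪x - R • u, y⟫ :=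
    calc -(ε * ‖y‖) ≤ -(‖x - R • u‖ * ‖y‖) := by
          gcongr
          exact (mem_ball_iff_norm.mp hx).le
      _ ≤ ⟪x - R • u, y⟫ := neg_le_of_abs_le (abs_real_inner_le_norm _ _)
  linarith

variable [MeasurableSpace E] [BorelSpace E]

theorem measure_ball_eq_of_norm_eq {μ : Measure E} (hμ : ∀ O : E ≃ₗᵢ[ℝ] E, μ.map O = μ)
    {p q : E} (hpq : ‖p‖ = ‖q‖) (r : ℝ) : μ (ball p r) = μ (ball q r) := by
  set O := (ℝ ∙ (p - q))ᗮ.reflection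
  have hO : O p = q := Submodule.reflection_sub hpq
  calc μ (ball p r) = μ (O ⁻¹' ball q r) := by rw [← hO, O.isometry.preimage_ball]
    _ = μ (ball q r) := by rw [← Measure.map_apply O.continuous.measurable measurableSet_ball, hμ]

theorem exp_mul_measureReal_ball_le_setIntegral_exp_inner [ProperSpace E] {μ : Measure E}
    [IsFiniteMeasure μ] {R ε : ℝ} (hμ : μ (closedBall 0 R)ᶜ = 0) {u y : E}
    (huy : ⟪u, y⟫ = ‖y‖) :
    Real.exp ((R - ε) * ‖y‖) * μ.real (ball (R • u) ε) ≤
      ∫ x in closedBall 0 R, Real.exp ⟪x, y⟫ ∂μ := by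
  set S := ball (R • u) ε ∩ closedBall 0 R
  have hint : IntegrableOn (fun x ↦ Real.exp ⟪x, y⟫) (closedBall 0 R) μ :=
    (continuous_id.inner continuous_const).rexp.continuousOn.integrableOn_compact
      (isCompact_closedBall 0 R)
  have hS : μ.real S = μ.real (ball (R • u) ε) := by
    simp only [S, Measure.real, measure_inter_conull hμ]
  calc Real.exp ((R - ε) * ‖y‖) * μ.real (ball (R • u) ε)
      = μ.real S • Real.exp ((R - ε) * ‖y‖) := by rw [hS, smul_eq_mul, mul_comm]
    _ ≤ ∫ x in S, Real.exp ⟪x, y⟫ ∂μ :=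
        setIntegral_ge_of_const_le (measurableSet_ball.inter measurableSet_closedBall)
          (measure_ne_top μ S)
          (fun x hx ↦ Real.exp_le_exp.mpr (sub_mul_norm_le_inner_of_mem_ball huy hx.1))
          (hint.mono_set Set.inter_subset_right)
    _ ≤ ∫ x in closedBall 0 R, Real.exp ⟪x, y⟫ ∂μ :=
        setIntegral_mono_set hint (.of_forall fun _ ↦ (Real.exp_pos _).le)
          Set.inter_subset_right.eventuallyLE

theorem laplace_transform_lower_bound
    (n : ℕ) (hn : 1 ≤ n) (R₁ : ℝ) (hR₁ : 0 < R₁)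
    (μ : Measure (EuclideanSpace ℝ (Fin n))) [IsFiniteMeasure μ]
    (hsupp_in : μ (closedBall (0 : EuclideanSpace ℝ (Fin n)) R₁)ᶜ = 0)
    (hsupp_full : ∀ x ∈ closedBall (0 : EuclideanSpace ℝ (Fin n)) R₁,
        ∀ δ > (0 : ℝ), 0 < μ (ball x δ))
    (hrot : ∀ O : EuclideanSpace ℝ (Fin n) ≃ₗᵢ[ℝ] EuclideanSpace ℝ (Fin n),
        Measure.map O μ = μ) :
    ∀ ε > (0 : ℝ), ∃ c > (0 : ℝ), ∀ y : EuclideanSpace ℝ (Fin n),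
      c * Real.exp ((R₁ - ε) * ‖y‖) ≤
        ∫ x in closedBall (0 : EuclideanSpace ℝ (Fin n)) R₁,
          Real.exp (inner ℝ x y : ℝ) ∂μ := by
  intro ε hε
  have : Nontrivial (EuclideanSpace ℝ (Fin n)) :=
    Module.nontrivial_of_finrank_pos (R := ℝ) (by rwa [finrank_euclideanSpace_fin])
  obtain ⟨e, he⟩ := exists_norm_eq (EuclideanSpace ℝ (Fin n)) zero_le_one
  have hmass : 0 < μ (ball (R₁ • e) ε) :=
    hsupp_full _ (by simp [norm_smul, he, abs_of_pos hR₁]) ε hε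
  refine ⟨μ.real (ball (R₁ • e) ε), ENNReal.toReal_pos hmass.ne' (measure_ne_top μ _), fun y ↦ ?_⟩
  obtain ⟨u, hu, huy⟩ := exists_norm_eq_one_inner_eq_norm y
  have hball : μ.real (ball (R₁ • e) ε) = μ.real (ball (R₁ • u) ε) :=
    congrArg ENNReal.toReal (measure_ball_eq_of_norm_eq hrot (by simp [norm_smul, he, hu]) ε)
  rw [mul_comm, hball]
  exact exp_mul_measureReal_ball_le_setIntegral_exp_inner hsupp_in huy
end
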